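/- arXiv:2007.04952 — 5 statements merged into one kernel-verified Lean document; each statement's English description precedes it below -/
import Mathlib

section
/- For any polynomial f in Z[x_1,...,x_ℓ] (allowing Laurent variables) and any 1 ≤ i ≤ ℓ-2, there holds π_{i+1}(Φ(f)) = Φ(π_i(f)), where Φ is the algebra homomorphism sending x_j to x_{j+1} for j < ℓ and x_ℓ to q·x_1. -/
open MvPolynomial

noncomputable section

/-- The field of fractions of `ℤ[q, x_1, …, x_ℓ]`, in which the ring
`ℤ[q, q⁻¹][x_1^{±1}, …, x_ℓ^{±1}]` lives; the variable indexed by `none` is `q`. -/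
abbrev Kq (ℓ : ℕ) : Type := FractionRing (MvPolynomial (Option (Fin ℓ)) ℤ)

/-- The element `q`. -/
noncomputable def qv (ℓ : ℕ) : Kq ℓ :=
  algebraMap (MvPolynomial (Option (Fin ℓ)) ℤ) (Kq ℓ) (X none)

/-- The variable `x_{i+1}` (variables indexed `0, …, ℓ-1`). -/
noncomputable def Xq (ℓ : ℕ) (i : ℕ) : Kq ℓ :=
  if h : i < ℓ then algebraMap (MvPolynomial (Option (Fin ℓ)) ℤ) (Kq ℓ) (X (some ⟨i, h⟩))
  else 1

noncomputable def swapAlgQ (ℓ i : ℕ) :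
    MvPolynomial (Option (Fin ℓ)) ℤ ≃ₐ[ℤ] MvPolynomial (Option (Fin ℓ)) ℤ :=
  if h : i + 1 < ℓ then
    renameEquiv ℤ (Equiv.swap (some ⟨i, Nat.lt_of_succ_lt h⟩) (some ⟨i + 1, h⟩))
  else AlgEquiv.refl

/-- The exchange `x_i ↔ x_{i+1}` (fixing `q`), extended to the fraction field. -/
noncomputable def swapKq (ℓ i : ℕ) : Kq ℓ →+* Kq ℓ :=
  IsFractionRing.lift (g := (algebraMap (MvPolynomial (Option (Fin ℓ)) ℤ) (Kq ℓ)).comp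
      (swapAlgQ ℓ i).toAlgHom.toRingHom)
    (by rw [RingHom.coe_comp]
        exact (IsFractionRing.injective _ _).comp (swapAlgQ ℓ i).injective)

/-- The Demazure operator `π_i f = (x_i f - x_{i+1} s_i f)/(x_i - x_{i+1})`
(variables indexed `0, …, ℓ-1`). -/
noncomputable def demQ (ℓ i : ℕ) (f : Kq ℓ) : Kq ℓ :=
  (Xq ℓ i * f - Xq ℓ (i + 1) * swapKq ℓ i f) / (Xq ℓ i - Xq ℓ (i + 1))

/-- The ring `ℤ[q, q⁻¹][x_1^{±1}, …, x_ℓ^{±1}]` as a subalgebra of the fraction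
field. -/
noncomputable def laurentRingQ (ℓ : ℕ) : Subalgebra ℤ (Kq ℓ) :=
  Algebra.adjoin ℤ
    ({qv ℓ, (qv ℓ)⁻¹} ∪ (Set.range fun i : Fin ℓ => Xq ℓ (i : ℕ)) ∪
      (Set.range fun i : Fin ℓ => (Xq ℓ (i : ℕ))⁻¹))


lemma swapKq_algebraMap (ℓ i : ℕ) (p : MvPolynomial (Option (Fin ℓ)) ℤ) :
    swapKq ℓ i (algebraMap (MvPolynomial (Option (Fin ℓ)) ℤ) (Kq ℓ) p) =
      algebraMap (MvPolynomial (Option (Fin ℓ)) ℤ) (Kq ℓ) (swapAlgQ ℓ i p) :=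
  IsFractionRing.lift_algebraMap _ _

lemma swapKq_qv (ℓ i : ℕ) : swapKq ℓ i (qv ℓ) = qv ℓ := by
  rw [qv, swapKq_algebraMap, swapAlgQ]
  split
  · rw [renameEquiv_apply, rename_X, Equiv.swap_apply_of_ne_of_ne] <;> simp
  · rfl

lemma Xq_eq (ℓ j : ℕ) (hj : j < ℓ) :
    Xq ℓ j = algebraMap (MvPolynomial (Option (Fin ℓ)) ℤ) (Kq ℓ) (X (some ⟨j, hj⟩)) :=
  dif_pos hj

lemma swapKq_Xq_left (ℓ i : ℕ) (h : i + 1 < ℓ) :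
    swapKq ℓ i (Xq ℓ i) = Xq ℓ (i + 1) := by
  rw [Xq_eq ℓ i (Nat.lt_of_succ_lt h), Xq_eq ℓ (i + 1) h, swapKq_algebraMap, swapAlgQ, dif_pos h]
  rw [renameEquiv_apply, rename_X, Equiv.swap_apply_left]

lemma swapKq_Xq_right (ℓ i : ℕ) (h : i + 1 < ℓ) :
    swapKq ℓ i (Xq ℓ (i + 1)) = Xq ℓ i := by
  rw [Xq_eq ℓ i (Nat.lt_of_succ_lt h), Xq_eq ℓ (i + 1) h, swapKq_algebraMap, swapAlgQ, dif_pos h]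
  rw [renameEquiv_apply, rename_X, Equiv.swap_apply_right]

lemma swapKq_Xq_ne (ℓ i j : ℕ) (h : i + 1 < ℓ) (hj : j < ℓ) (h1 : j ≠ i) (h2 : j ≠ i + 1) :
    swapKq ℓ i (Xq ℓ j) = Xq ℓ j := by
  rw [Xq_eq ℓ j hj, swapKq_algebraMap, swapAlgQ, dif_pos h]
  rw [renameEquiv_apply, rename_X, Equiv.swap_apply_of_ne_of_ne]
  · simp [Fin.ext_iff, h1]
  · simp [Fin.ext_iff, h2]

lemma swap_comm (ℓ : ℕ) (Φ : Kq ℓ →+* Kq ℓ)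
    (hΦq : Φ (qv ℓ) = qv ℓ)
    (hΦx : ∀ j : ℕ, j + 1 < ℓ → Φ (Xq ℓ j) = Xq ℓ (j + 1))
    (hΦlast : Φ (Xq ℓ (ℓ - 1)) = qv ℓ * Xq ℓ 0)
    (i : ℕ) (hi : i + 2 < ℓ)
    (f : Kq ℓ) (hf : f ∈ laurentRingQ ℓ) :
    swapKq ℓ (i + 1) (Φ f) = Φ (swapKq ℓ i f) := by
  have hi1 : i + 1 < ℓ := Nat.lt_of_succ_lt hi
  have hi2 : i + 1 + 1 < ℓ := hi
  -- value on each `x_j`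
  have hx : ∀ j : ℕ, j < ℓ → swapKq ℓ (i + 1) (Φ (Xq ℓ j)) = Φ (swapKq ℓ i (Xq ℓ j)) := by
    intro j hj
    by_cases hlast : j = ℓ - 1
    · subst hlast
      have h0 : (0 : ℕ) ≠ i + 1 := by omega
      have h00 : (0 : ℕ) ≠ i + 1 + 1 := by omega
      rw [hΦlast, map_mul, swapKq_qv,
        swapKq_Xq_ne ℓ (i + 1) 0 hi2 (by omega) h0 h00,
        swapKq_Xq_ne ℓ i (ℓ - 1) hi1 (by omega) (by omega) (by omega), hΦlast]
    · have hj1 : j + 1 < ℓ := by omega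
      by_cases hji : j = i
      · subst hji
        rw [hΦx j hj1, swapKq_Xq_left ℓ (j + 1) hi2, swapKq_Xq_left ℓ j hi1,
          hΦx (j + 1) hi2]
      · by_cases hji1 : j = i + 1
        · subst hji1
          rw [hΦx (i + 1) hj1, swapKq_Xq_right ℓ (i + 1) hi2, swapKq_Xq_right ℓ i hi1,
            hΦx i hi1]
        · rw [hΦx j hj1, swapKq_Xq_ne ℓ (i + 1) (j + 1) hi2 hj1 (by omega) (by omega),
            swapKq_Xq_ne ℓ i j hi1 (by omega) hji hji1, hΦx j hj1]
  induction hf using Algebra.adjoin_induction with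
  | mem x hx' =>
    rcases hx' with (hq | hX) | hXinv
    · rcases hq with hq | hq
      · subst hq; rw [hΦq, swapKq_qv, swapKq_qv, hΦq]
      · rw [Set.mem_singleton_iff] at hq; subst hq
        rw [map_inv₀, map_inv₀, map_inv₀, map_inv₀, hΦq, swapKq_qv, swapKq_qv, hΦq]
    · obtain ⟨j, rfl⟩ := hX
      exact hx j j.isLt
    · obtain ⟨j, rfl⟩ := hXinv
      rw [map_inv₀, map_inv₀, map_inv₀, map_inv₀, hx j j.isLt]
  | algebraMap r => simp [map_intCast]
  | add x y hx' hy' ihx ihy => rw [map_add, map_add, map_add, map_add, ihx, ihy]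
  | mul x y hx' hy' ihx ihy => rw [map_mul, map_mul, map_mul, map_mul, ihx, ihy]

/-- For any Laurent polynomial `f ∈ ℤ[q,q⁻¹][x_1^{±1},…,x_ℓ^{±1}]`
and any `1 ≤ i ≤ ℓ-2` (0-indexed: `i + 2 < ℓ`), `π_{i+1}(Φ f) = Φ(π_i f)`, where
`Φ` is the ℤ[q,q⁻¹]-algebra homomorphism with `Φ(x_j) = x_{j+1}` for `j < ℓ` and
`Φ(x_ℓ) = q x_1` (here `Φ` is any ring endomorphism of the ambient field with these
values on the generators, which determines it uniquely). -/
theorem demazure_rotation (ℓ : ℕ) (Φ : Kq ℓ →+* Kq ℓ)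
    (hΦq : Φ (qv ℓ) = qv ℓ)
    (hΦx : ∀ j : ℕ, j + 1 < ℓ → Φ (Xq ℓ j) = Xq ℓ (j + 1))
    (hΦlast : Φ (Xq ℓ (ℓ - 1)) = qv ℓ * Xq ℓ 0)
    (i : ℕ) (hi : i + 2 < ℓ)
    (f : Kq ℓ) (hf : f ∈ laurentRingQ ℓ) :
    demQ ℓ (i + 1) (Φ f) = Φ (demQ ℓ i f) := by
  have hi1 : i + 1 < ℓ := Nat.lt_of_succ_lt hi
  rw [demQ, demQ, map_div₀, map_sub, map_sub, map_mul, map_mul,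
    hΦx i hi1, hΦx (i + 1) hi, swap_comm ℓ Φ hΦq hΦx hΦlast i hi f hf]
end
end

section
/- For 2 ≤ i ≤ ℓ, and any Laurent polynomial f, x_i^{-1}·π_{i-1}(f) = π_{i-1}(x_{i-1}^{-1}·f) + x_i^{-1}·f. -/
open MvPolynomial

noncomputable section

abbrev Kf (ℓ : ℕ) : Type := FractionRing (MvPolynomial (Fin ℓ) ℤ)

noncomputable def Xv (ℓ : ℕ) (i : ℕ) : Kf ℓ :=
  if h : i < ℓ then algebraMap (MvPolynomial (Fin ℓ) ℤ) (Kf ℓ) (X ⟨i, h⟩) else 1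

noncomputable def swapAlg (ℓ i : ℕ) :
    MvPolynomial (Fin ℓ) ℤ ≃ₐ[ℤ] MvPolynomial (Fin ℓ) ℤ :=
  if h : i + 1 < ℓ then
    renameEquiv ℤ (Equiv.swap ⟨i, Nat.lt_of_succ_lt h⟩ ⟨i + 1, h⟩)
  else AlgEquiv.refl

noncomputable def swapK (ℓ i : ℕ) : Kf ℓ →+* Kf ℓ :=
  IsFractionRing.lift (g := (algebraMap (MvPolynomial (Fin ℓ) ℤ) (Kf ℓ)).comp
      (swapAlg ℓ i).toAlgHom.toRingHom)
    (by rw [RingHom.coe_comp]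
        exact (IsFractionRing.injective _ _).comp (swapAlg ℓ i).injective)

noncomputable def dem (ℓ i : ℕ) (f : Kf ℓ) : Kf ℓ :=
  (Xv ℓ i * f - Xv ℓ (i + 1) * swapK ℓ i f) / (Xv ℓ i - Xv ℓ (i + 1))

/-- The ring of Laurent polynomials `ℤ[x_1^{±1}, …, x_ℓ^{±1}]`, realized as the
subalgebra of the fraction field generated by the variables and their inverses. -/
noncomputable def laurentRing (ℓ : ℕ) : Subalgebra ℤ (Kf ℓ) :=
  Algebra.adjoin ℤ
    ((Set.range fun i : Fin ℓ => Xv ℓ (i : ℕ)) ∪ (Set.range fun i : Fin ℓ => (Xv ℓ (i : ℕ))⁻¹))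



lemma swapK_algebraMap (ℓ i : ℕ) (p : MvPolynomial (Fin ℓ) ℤ) :
    swapK ℓ i (algebraMap (MvPolynomial (Fin ℓ) ℤ) (Kf ℓ) p) =
      algebraMap (MvPolynomial (Fin ℓ) ℤ) (Kf ℓ) (swapAlg ℓ i p) := by
  simp [swapK, IsFractionRing.lift_algebraMap]

lemma swapK_Xv_left (ℓ j : ℕ) (hj : j + 1 < ℓ) :
    swapK ℓ j (Xv ℓ j) = Xv ℓ (j + 1) := by
  rw [Xv, Xv, dif_pos (Nat.lt_of_succ_lt hj), dif_pos hj, swapK_algebraMap,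
    swapAlg, dif_pos hj]
  simp

lemma Xv_ne_zero (ℓ i : ℕ) (h : i < ℓ) : Xv ℓ i ≠ 0 := by
  rw [Xv, dif_pos h]
  intro hc
  rw [← map_zero (algebraMap (MvPolynomial (Fin ℓ) ℤ) (Kf ℓ))] at hc
  have := (IsFractionRing.injective (MvPolynomial (Fin ℓ) ℤ) (Kf ℓ)) hc
  exact MvPolynomial.X_ne_zero _ this

lemma Xv_sub_ne_zero (ℓ j : ℕ) (hj : j + 1 < ℓ) : Xv ℓ j - Xv ℓ (j + 1) ≠ 0 := by
  rw [Xv, Xv, dif_pos (Nat.lt_of_succ_lt hj), dif_pos hj, sub_ne_zero]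
  intro hc
  have := (IsFractionRing.injective (MvPolynomial (Fin ℓ) ℤ) (Kf ℓ)) hc
  have := MvPolynomial.X_injective this
  simp [Fin.ext_iff] at this

set_option synthInstance.maxHeartbeats 1000000 in
/-- For `2 ≤ i ≤ ℓ` (paper indexing) and any Laurent polynomial `f`:
`x_i⁻¹ · π_{i-1} f = π_{i-1}(x_{i-1}⁻¹ · f) + x_i⁻¹ · f`.
With variables indexed `0, …, ℓ-1` and `j := i - 2`, this reads
`x_{j+1}⁻¹ · π_j f = π_j (x_j⁻¹ · f) + x_{j+1}⁻¹ · f` for `j + 1 < ℓ`. -/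
theorem demazure_xinv_shift' (ℓ j : ℕ) (hj : j + 1 < ℓ)
    (f : Kf ℓ) (hf : f ∈ laurentRing ℓ) :
    (Xv ℓ (j + 1))⁻¹ * dem ℓ j f =
      dem ℓ j ((Xv ℓ j)⁻¹ * f) + (Xv ℓ (j + 1))⁻¹ * f := by
  have ha := Xv_ne_zero ℓ j (Nat.lt_of_succ_lt hj)
  have hb := Xv_ne_zero ℓ (j+1) hj
  have hab := Xv_sub_ne_zero ℓ j hj
  rw [dem, dem, map_mul, map_inv₀, swapK_Xv_left ℓ j hj]
  field_simp
  ring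
end
end

section
/- The key polynomials κ_α for α ranging over weak compositions in Z_{≥0}^ℓ form a Z-basis of the polynomial ring Z[x_1,...,x_ℓ]. -/
open MvPolynomial

noncomputable section

noncomputable def monK (ℓ : ℕ) (α : Fin ℓ → ℤ) : Kf ℓ := ∏ i : Fin ℓ, Xv ℓ i ^ α i

def swapVec (ℓ i : ℕ) (α : Fin ℓ → ℤ) : Fin ℓ → ℤ :=
  if h : i + 1 < ℓ then α ∘ Equiv.swap ⟨i, Nat.lt_of_succ_lt h⟩ ⟨i + 1, h⟩ else α

def ascAt (ℓ : ℕ) (α : Fin ℓ → ℤ) (i : ℕ) : Prop :=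
  ∃ h : i + 1 < ℓ, α ⟨i, Nat.lt_of_succ_lt h⟩ < α ⟨i + 1, h⟩

instance (ℓ : ℕ) (α : Fin ℓ → ℤ) (i : ℕ) : Decidable (ascAt ℓ α i) := by
  unfold ascAt; infer_instance

/-- The key polynomial computed with the given amount of fuel: repeatedly pick an
ascent `i` of `α` (a position with `α i < α (i+1)`) and use `κ_α = π_i κ_{s_i α}`;
for antitone `α`, `κ_α = x^α`. -/
noncomputable def keyAux (ℓ : ℕ) : ℕ → (Fin ℓ → ℤ) → Kf ℓ
  | 0, α => monK ℓ α
  | n + 1, α =>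
    if h : ∃ i : Fin ℓ, ascAt ℓ α (i : ℕ) then
      dem ℓ (h.choose : ℕ) (keyAux ℓ n (swapVec ℓ (h.choose : ℕ) α))
    else monK ℓ α

/-- The key polynomial `κ_α = π_{p(α)} x^{α⁺}`, `α ∈ ℤ^ℓ`, as an element of the
fraction field; fuel `ℓ * ℓ` always suffices. -/
noncomputable def keyPoly (ℓ : ℕ) (α : Fin ℓ → ℤ) : Kf ℓ := keyAux ℓ (ℓ * ℓ) α

/-- A finite ℤ-linear combination of key polynomials. -/
noncomputable def keyComb (ℓ : ℕ) (c : (Fin ℓ → ℤ) →₀ ℤ) : Kf ℓ :=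
  c.sum fun α k => k • keyPoly ℓ α

/-- The positive (polynomial) part of a ℤ-linear combination of key polynomials:
only the terms `κ_α` with `α ∈ ℤ_{≥0}^ℓ` are kept. -/
noncomputable def keyCombPos (ℓ : ℕ) (c : (Fin ℓ → ℤ) →₀ ℤ) : Kf ℓ :=
  c.sum fun α k => if ∀ i, 0 ≤ α i then k • keyPoly ℓ α else 0



open MvPolynomial

noncomputable section

namespace KeyBasisAux

open Finset

variable {ℓ : ℕ}

def F (v : Fin ℓ → ℕ) : Fin ℓ →₀ ℕ := Finsupp.equivFunOnFinite.symm v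

@[simp] lemma F_apply (v : Fin ℓ → ℕ) (i : Fin ℓ) : F v i = v i := rfl

@[simp] lemma F_coe (e : Fin ℓ →₀ ℕ) : F ⇑e = e := Finsupp.equivFunOnFinite_symm_coe e

lemma F_inj : Function.Injective (F (ℓ := ℓ)) := Finsupp.equivFunOnFinite.symm.injective

noncomputable def mon (v : Fin ℓ → ℕ) : MvPolynomial (Fin ℓ) ℤ := monomial (F v) 1

lemma mon_congr {v w : Fin ℓ → ℕ} (h : v = w) : mon v = mon w := by rw [h]

def upd (p q : Fin ℓ) (v : Fin ℓ → ℕ) (k : ℕ) : Fin ℓ → ℕ :=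
  Function.update (Function.update v p k) q (v p + v q - k)

lemma upd_p {p q : Fin ℓ} (hpq : p ≠ q) (v : Fin ℓ → ℕ) (k : ℕ) : upd p q v k p = k := by
  rw [upd, Function.update_of_ne hpq, Function.update_self]

lemma upd_q (p q : Fin ℓ) (v : Fin ℓ → ℕ) (k : ℕ) : upd p q v k q = v p + v q - k := by
  rw [upd, Function.update_self]

lemma upd_other {p q x : Fin ℓ} (hx : x ≠ p) (hx' : x ≠ q) (v : Fin ℓ → ℕ) (k : ℕ) :
    upd p q v k x = v x := by
  rw [upd, Function.update_of_ne hx', Function.update_of_ne hx]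

lemma upd2_congr (p q : Fin ℓ) (v : Fin ℓ → ℕ) {k k' m m' : ℕ} (h1 : k = k') (h2 : m = m') :
    Function.update (Function.update v p k) q m
      = Function.update (Function.update v p k') q m' := by rw [h1, h2]

lemma add_single (p : Fin ℓ) (v : Fin ℓ → ℕ) :
    Finsupp.single p 1 + F v = F (Function.update v p (v p + 1)) := by
  ext i
  by_cases h : i = p
  · subst h; simp; omega
  · simp [Finsupp.single_apply, Ne.symm h, Function.update_of_ne h]

lemma X_mul_mon (p : Fin ℓ) (v : Fin ℓ → ℕ) :
    X p * mon v = mon (Function.update v p (v p + 1)) := by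
  rw [mon, mon, X, monomial_mul, one_mul, add_single]

noncomputable def demP (p q : Fin ℓ) (v : Fin ℓ → ℕ) : MvPolynomial (Fin ℓ) ℤ :=
  if v q ≤ v p then ∑ j ∈ range (v p - v q + 1), mon (upd p q v (v q + j))
  else -∑ j ∈ range (v q - v p - 1), mon (upd p q v (v p + 1 + j))

lemma swap_comp_eq (p q : Fin ℓ) (hpq : p ≠ q) (v : Fin ℓ → ℕ) :
    v ∘ Equiv.swap p q = Function.update (Function.update v p (v q)) q (v p) := by
  funext x
  by_cases hx : x = q
  · subst hx; simp [Equiv.swap_apply_right, Function.update_self]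
  · by_cases hxp : x = p
    · subst hxp
      rw [Function.comp_apply, Equiv.swap_apply_left, Function.update_of_ne hpq,
        Function.update_self]
    · rw [Function.comp_apply, Equiv.swap_apply_of_ne_of_ne hxp hx,
        Function.update_of_ne hx, Function.update_of_ne hxp]

lemma demP_identity (p q : Fin ℓ) (hpq : p ≠ q) (v : Fin ℓ → ℕ) :
    (X p - X q) * demP p q v = X p * mon v - X q * mon (v ∘ Equiv.swap p q) := by
  have hqp : q ≠ p := hpq.symm
  have hXv : X p * mon v
      = mon (Function.update (Function.update v p (v p + 1)) q (v q)) := by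
    rw [X_mul_mon]
    apply mon_congr
    funext x
    by_cases hx : x = q
    · subst hx
      rw [Function.update_self, Function.update_of_ne hqp]
    · rw [Function.update_of_ne hx]
  have hXw : X q * mon (v ∘ Equiv.swap p q)
      = mon (Function.update (Function.update v p (v q)) q (v p + 1)) := by
    rw [X_mul_mon, swap_comp_eq p q hpq]
    apply mon_congr
    rw [Function.update_idem]
    apply upd2_congr
    · rfl
    · rw [Function.update_self]
  have hstep1 : ∀ k : ℕ,
      X p * mon (upd p q v k)
        = mon (Function.update (Function.update v p (k + 1)) q (v p + v q - k)) := by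
    intro k
    rw [X_mul_mon, upd_p hpq]
    apply mon_congr
    funext x
    by_cases hx : x = q
    · subst hx
      rw [Function.update_of_ne hqp, upd_q, Function.update_self]
    · by_cases hxp : x = p
      · subst hxp
        rw [Function.update_self, Function.update_of_ne hpq, Function.update_self]
      · rw [Function.update_of_ne hxp, upd_other hxp hx, Function.update_of_ne hx,
          Function.update_of_ne hxp]
  have hstep2 : ∀ k : ℕ,
      X q * mon (upd p q v k)
        = mon (Function.update (Function.update v p k) q (v p + v q - k + 1)) := by
    intro k
    rw [X_mul_mon, upd_q]
    apply mon_congr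
    rw [upd, Function.update_idem]
  rcases le_or_gt (v q) (v p) with hba | hab
  · rw [demP, if_pos hba]
    set W : ℕ → MvPolynomial (Fin ℓ) ℤ :=
      fun j => mon (Function.update (Function.update v p (v q + j)) q (v p + 1 - j)) with hW
    have hterm : ∀ j ∈ range (v p - v q + 1),
        (X p - X q) * mon (upd p q v (v q + j)) = W (j + 1) - W j := by
      intro j hj
      rw [mem_range] at hj
      rw [sub_mul, hstep1 (v q + j), hstep2 (v q + j), hW]
      simp only []
      rw [show Function.update (Function.update v p (v q + j + 1)) q (v p + v q - (v q + j))
            = Function.update (Function.update v p (v q + (j + 1))) q (v p + 1 - (j + 1)) from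
          upd2_congr p q v (by omega) (by omega),
        show Function.update (Function.update v p (v q + j)) q (v p + v q - (v q + j) + 1)
            = Function.update (Function.update v p (v q + j)) q (v p + 1 - j) from
          upd2_congr p q v rfl (by omega)]
    rw [Finset.mul_sum, Finset.sum_congr rfl hterm, Finset.sum_range_sub, hXv, hXw]
    simp only [hW]
    rw [show Function.update (Function.update v p (v q + (v p - v q + 1))) q
            (v p + 1 - (v p - v q + 1))
          = Function.update (Function.update v p (v p + 1)) q (v q) from
        upd2_congr p q v (by omega) (by omega),
      show Function.update (Function.update v p (v q + 0)) q (v p + 1 - 0)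
          = Function.update (Function.update v p (v q)) q (v p + 1) from
        upd2_congr p q v (by omega) (by omega)]
  · rw [demP, if_neg (by omega)]
    set V : ℕ → MvPolynomial (Fin ℓ) ℤ :=
      fun j => mon (Function.update (Function.update v p (v p + j)) q (v q + 1 - j)) with hV
    have hterm : ∀ j ∈ range (v q - v p - 1),
        (X p - X q) * mon (upd p q v (v p + 1 + j)) = V (j + 1 + 1) - V (j + 1) := by
      intro j hj
      rw [mem_range] at hj
      rw [sub_mul, hstep1 (v p + 1 + j), hstep2 (v p + 1 + j), hV]
      simp only []
      rw [show Function.update (Function.update v p (v p + 1 + j + 1)) q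
              (v p + v q - (v p + 1 + j))
            = Function.update (Function.update v p (v p + (j + 1 + 1))) q
              (v q + 1 - (j + 1 + 1)) from
          upd2_congr p q v (by omega) (by omega),
        show Function.update (Function.update v p (v p + 1 + j)) q
              (v p + v q - (v p + 1 + j) + 1)
            = Function.update (Function.update v p (v p + (j + 1))) q (v q + 1 - (j + 1)) from
          upd2_congr p q v (by omega) (by omega)]
    rw [mul_neg, Finset.mul_sum, Finset.sum_congr rfl hterm,
      Finset.sum_range_sub (fun j => V (j + 1)), hXv, hXw]
    simp only [hV]
    rw [show Function.update (Function.update v p (v p + (v q - v p - 1 + 1))) q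
            (v q + 1 - (v q - v p - 1 + 1))
          = Function.update (Function.update v p (v q)) q (v p + 1) from
        upd2_congr p q v (by omega) (by omega),
      show Function.update (Function.update v p (v p + (0 + 1))) q (v q + 1 - (0 + 1))
          = Function.update (Function.update v p (v p + 1)) q (v q) from
        upd2_congr p q v (by omega) (by omega)]
    ring

end KeyBasisAux

namespace KeyBasisAux

open Finset MvPolynomial

variable {ℓ : ℕ}

def Nsq (v : Fin ℓ → ℕ) : ℕ := ∑ i, (v i) ^ 2

def invc (v : Fin ℓ → ℕ) : ℕ :=
  ((univ : Finset (Fin ℓ × Fin ℓ)).filter fun pr => pr.1 < pr.2 ∧ v pr.1 < v pr.2).card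

def μ (v : Fin ℓ → ℕ) : ℕ := (ℓ * ℓ + 1) * Nsq v + invc v

lemma invc_lt (v : Fin ℓ → ℕ) : invc v < ℓ * ℓ + 1 := by
  have h1 : invc v ≤ (univ : Finset (Fin ℓ × Fin ℓ)).card := Finset.card_filter_le _ _
  have h2 : (univ : Finset (Fin ℓ × Fin ℓ)).card = ℓ * ℓ := by
    rw [Finset.card_univ, Fintype.card_prod, Fintype.card_fin]
  omega

lemma mu_lt_of_Nsq_lt {v w : Fin ℓ → ℕ} (h : Nsq w < Nsq v) : μ w < μ v := by
  have h1 := invc_lt w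
  have h2 : (ℓ * ℓ + 1) * (Nsq w + 1) ≤ (ℓ * ℓ + 1) * Nsq v := Nat.mul_le_mul_left _ (by omega)
  rw [μ, μ]
  nlinarith

lemma Nsq_le_of_mu_lt {v w : Fin ℓ → ℕ} (h : μ w < μ v) : Nsq w ≤ Nsq v := by
  by_contra hc
  push_neg at hc
  exact absurd (mu_lt_of_Nsq_lt hc) (by omega)

lemma Nsq_swap (p q : Fin ℓ) (v : Fin ℓ → ℕ) : Nsq (v ∘ Equiv.swap p q) = Nsq v :=
  Equiv.sum_comp (Equiv.swap p q) (fun i => (v i) ^ 2)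

lemma Nsq_split (p q : Fin ℓ) (hpq : p ≠ q) (v : Fin ℓ → ℕ) :
    Nsq v = (v p) ^ 2 + ((v q) ^ 2 + ∑ x ∈ (univ.erase p).erase q, (v x) ^ 2) := by
  rw [Nsq, ← Finset.add_sum_erase univ _ (mem_univ p),
    ← Finset.add_sum_erase (univ.erase p) _ (Finset.mem_erase.2 ⟨hpq.symm, mem_univ q⟩)]

lemma Nsq_upd (p q : Fin ℓ) (hpq : p ≠ q) (v : Fin ℓ → ℕ) (k : ℕ) :
    Nsq (upd p q v k) = k ^ 2 + ((v p + v q - k) ^ 2 + ∑ x ∈ (univ.erase p).erase q, (v x) ^ 2) := by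
  rw [Nsq_split p q hpq, upd_p hpq, upd_q]
  congr 2
  apply Finset.sum_congr rfl
  intro x hx
  rw [Finset.mem_erase, Finset.mem_erase] at hx
  rw [upd_other hx.2.1 hx.1]

lemma sq_lt_core {a b k : ℕ} (h1 : b < k) (h2 : k < a) :
    k ^ 2 + (a + b - k) ^ 2 < a ^ 2 + b ^ 2 := by
  have hk : k ≤ a + b := by omega
  zify [hk]
  nlinarith [mul_pos (by omega : (0:ℤ) < (a:ℤ) - k) (by omega : (0:ℤ) < (k:ℤ) - b)]

lemma Nsq_upd_lt {p q : Fin ℓ} (hpq : p ≠ q) (v : Fin ℓ → ℕ) {k : ℕ}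
    (h1 : v q < k) (h2 : k < v p) : Nsq (upd p q v k) < Nsq v := by
  rw [Nsq_upd p q hpq, Nsq_split p q hpq]
  have := sq_lt_core h1 h2
  omega

lemma Nsq_upd_lt' {p q : Fin ℓ} (hpq : p ≠ q) (v : Fin ℓ → ℕ) {k : ℕ}
    (h1 : v p < k) (h2 : k < v q) : Nsq (upd p q v k) < Nsq v := by
  rw [Nsq_upd p q hpq, Nsq_split p q hpq]
  have : k ^ 2 + (v q + v p - k) ^ 2 < v q ^ 2 + v p ^ 2 := sq_lt_core h1 h2
  have hr : v p + v q - k = v q + v p - k := by omega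
  rw [hr]
  omega

lemma upd_self {p q : Fin ℓ} (hpq : p ≠ q) (v : Fin ℓ → ℕ) : upd p q v (v p) = v := by
  funext x
  by_cases hx : x = q
  · subst hx; rw [upd_q]; omega
  · by_cases hxp : x = p
    · subst hxp; rw [upd_p hpq]
    · rw [upd_other hxp hx]

lemma upd_swap {p q : Fin ℓ} (hpq : p ≠ q) (v : Fin ℓ → ℕ) :
    upd p q v (v q) = v ∘ Equiv.swap p q := by
  rw [swap_comp_eq p q hpq]
  funext x
  by_cases hx : x = q
  · subst hx; rw [upd_q, Function.update_self]; omega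
  · by_cases hxp : x = p
    · subst hxp
      rw [upd_p hpq, Function.update_of_ne hpq, Function.update_self]
    · rw [upd_other hxp hx, Function.update_of_ne hx, Function.update_of_ne hxp]

section Swap

variable {i : ℕ} (h : i + 1 < ℓ)

lemma swap_lt_iff (p q : Fin ℓ) (hp : (p : ℕ) + 1 = q) (x y : Fin ℓ)
    (h1 : ¬(x = p ∧ y = q)) (h2 : ¬(x = q ∧ y = p)) :
    x < y ↔ Equiv.swap p q x < Equiv.swap p q y := by
  simp only [Fin.ext_iff] at h1 h2
  simp only [Equiv.swap_apply_def, Fin.lt_def, Fin.ext_iff]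
  split_ifs <;> omega

lemma invc_swap (p q : Fin ℓ) (hp : (p : ℕ) + 1 = q) (v : Fin ℓ → ℕ)
    (hd : v q < v p) : invc (v ∘ Equiv.swap p q) = invc v + 1 := by
  have hpq : p ≠ q := by intro hc; rw [hc] at hp; omega
  have hplt : p < q := by rw [Fin.lt_def]; omega
  set s := Equiv.swap p q with hs
  set A := (univ : Finset (Fin ℓ × Fin ℓ)).filter
    (fun pr => pr.1 < pr.2 ∧ (v ∘ s) pr.1 < (v ∘ s) pr.2) with hA
  set B := (univ : Finset (Fin ℓ × Fin ℓ)).filter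
    (fun pr => pr.1 < pr.2 ∧ v pr.1 < v pr.2) with hB
  have hmemA : ∀ pr : Fin ℓ × Fin ℓ, pr ∈ A ↔ pr.1 < pr.2 ∧ v (s pr.1) < v (s pr.2) := by
    intro pr; rw [hA, Finset.mem_filter]; simp
  have hmemB : ∀ pr : Fin ℓ × Fin ℓ, pr ∈ B ↔ pr.1 < pr.2 ∧ v pr.1 < v pr.2 := by
    intro pr; rw [hB, Finset.mem_filter]; simp
  have hpqA : (p, q) ∈ A := by
    rw [hmemA]
    refine ⟨hplt, ?_⟩
    simp only [hs, Equiv.swap_apply_left, Equiv.swap_apply_right]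
    exact hd
  have hcard : A.card = (A.erase (p, q)).card + 1 := by
    rw [← Finset.card_erase_add_one hpqA]
  have hbij : (A.erase (p, q)).card = B.card := by
    apply Finset.card_bij (fun x _ => (s x.1, s x.2))
    · intro a ha
      rw [Finset.mem_erase] at ha
      obtain ⟨hane, haA⟩ := ha
      rw [hmemA] at haA
      have h2 : ¬(a.1 = q ∧ a.2 = p) := by
        rintro ⟨h1', h2'⟩
        have := haA.1
        rw [h1', h2'] at this
        exact absurd hplt (by exact lt_asymm this)
      have h1 : ¬(a.1 = p ∧ a.2 = q) := by
        rintro ⟨h1', h2'⟩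
        exact hane (by rw [← h1', ← h2'])
      rw [hmemB]
      constructor
      · exact (swap_lt_iff p q hp a.1 a.2 h1 h2).1 haA.1
      · exact haA.2
    · intro a1 ha1 a2 ha2 heq
      have e1 : s (s a1.1) = s (s a2.1) := by
        rw [show s a1.1 = s a2.1 from congrArg Prod.fst heq]
      have e2 : s (s a1.2) = s (s a2.2) := by
        rw [show s a1.2 = s a2.2 from congrArg Prod.snd heq]
      simp only [hs, Equiv.swap_apply_self] at e1 e2
      exact Prod.ext e1 e2
    · intro b hb
      rw [hmemB] at hb
      refine ⟨(s b.1, s b.2), ?_, ?_⟩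
      · rw [Finset.mem_erase]
        have hb1 : ¬(s b.1 = p ∧ s b.2 = q) := by
          rintro ⟨h1', h2'⟩
          have e1 : b.1 = q := by
            have := congrArg s h1'
            simpa [hs, Equiv.swap_apply_self, Equiv.swap_apply_left] using this
          have e2 : b.2 = p := by
            have := congrArg s h2'
            simpa [hs, Equiv.swap_apply_self, Equiv.swap_apply_right] using this
          rw [e1, e2] at hb
          exact absurd hplt (lt_asymm hb.1)
        have hb2 : ¬(s b.1 = q ∧ s b.2 = p) := by
          rintro ⟨h1', h2'⟩
          have e1 : b.1 = p := by
            have := congrArg s h1'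
            simpa [hs, Equiv.swap_apply_self, Equiv.swap_apply_right] using this
          have e2 : b.2 = q := by
            have := congrArg s h2'
            simpa [hs, Equiv.swap_apply_self, Equiv.swap_apply_left] using this
          rw [e1, e2] at hb
          exact absurd hb.2 (by omega)
        constructor
        · intro hc
          apply hb1
          exact ⟨congrArg Prod.fst hc, congrArg Prod.snd hc⟩
        · rw [hmemA]
          constructor
          · have hlt := hb.1
            have := swap_lt_iff p q hp (s b.1) (s b.2) hb1 hb2
            rw [this]
            simpa [hs, Equiv.swap_apply_self] using hlt
          · simp only [hs, Equiv.swap_apply_self]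
            exact hb.2
      · simp [hs, Equiv.swap_apply_self]
  have gA : invc (v ∘ s) = A.card := by rw [invc, hA]
  have gB : invc v = B.card := by rw [invc, hB]
  rw [gA, gB]
  omega

end Swap

end KeyBasisAux

namespace KeyBasisAux

open Finset MvPolynomial

variable {ℓ : ℕ}

lemma coe_F (v : Fin ℓ → ℕ) : ⇑(F v) = v := rfl

lemma coeff_mon (e : Fin ℓ →₀ ℕ) (v : Fin ℓ → ℕ) :
    coeff e (mon v) = if F v = e then 1 else 0 := coeff_monomial e (F v) 1

lemma demP_coeff_cases {p q : Fin ℓ} (hpq : p ≠ q) (v : Fin ℓ → ℕ) (e : Fin ℓ →₀ ℕ)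
    (hc : coeff e (demP p q v) ≠ 0) :
    Nsq ⇑e < Nsq v ∨ e = F v ∨ (v q < v p ∧ e = F (v ∘ Equiv.swap p q)) := by
  rw [demP] at hc
  by_cases hba : v q ≤ v p
  · rw [if_pos hba, coeff_sum] at hc
    obtain ⟨j, hj, hcj⟩ := Finset.exists_ne_zero_of_sum_ne_zero hc
    rw [mem_range] at hj
    rw [coeff_mon] at hcj
    have he : e = F (upd p q v (v q + j)) := by
      by_contra hne
      exact hcj (if_neg (fun hr => hne hr.symm))
    by_cases hk1 : v q + j = v p
    · right; left
      rw [he, hk1, upd_self hpq]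
    · by_cases hk0 : j = 0
      · subst hk0
        have hlt : v q < v p := by omega
        right; right
        refine ⟨hlt, ?_⟩
        rw [he]
        congr 1
        rw [show v q + 0 = v q from rfl, upd_swap hpq]
      · left
        rw [he, coe_F]
        exact Nsq_upd_lt hpq v (by omega) (by omega)
  · rw [if_neg hba, coeff_neg, neg_ne_zero, coeff_sum] at hc
    obtain ⟨j, hj, hcj⟩ := Finset.exists_ne_zero_of_sum_ne_zero hc
    rw [mem_range] at hj
    rw [coeff_mon] at hcj
    have he : e = F (upd p q v (v p + 1 + j)) := by
      by_contra hne
      exact hcj (if_neg (fun hr => hne hr.symm))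
    left
    rw [he, coe_F]
    exact Nsq_upd_lt' hpq v (by omega) (by omega)

lemma demP_coeff_swap {p q : Fin ℓ} (hpq : p ≠ q) (v : Fin ℓ → ℕ) (hd : v q < v p) :
    coeff (F (v ∘ Equiv.swap p q)) (demP p q v) = 1 := by
  rw [demP, if_pos (le_of_lt hd), coeff_sum]
  rw [Finset.sum_eq_single 0]
  · rw [coeff_mon, if_pos]
    congr 1
    rw [show v q + 0 = v q from rfl, upd_swap hpq]
  · intro j hj hj0
    rw [coeff_mon, if_neg]
    intro hr
    have := congrFun (congrArg (fun (f : Fin ℓ →₀ ℕ) => (f : Fin ℓ → ℕ)) hr) p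
    simp only [coe_F] at this
    rw [upd_p hpq] at this
    rw [swap_comp_eq p q hpq] at this
    rw [Function.update_of_ne hpq, Function.update_self] at this
    omega
  · intro h0
    exact absurd (mem_range.2 (by omega)) h0

section Transfer

lemma phi_inj : Function.Injective ⇑(algebraMap (MvPolynomial (Fin ℓ) ℤ) (Kf ℓ)) :=
  IsFractionRing.injective _ _

lemma Xv_eq {i : ℕ} (hi : i < ℓ) :
    Xv ℓ i = algebraMap (MvPolynomial (Fin ℓ) ℤ) (Kf ℓ) (X ⟨i, hi⟩) := dif_pos hi

lemma swapK_phi (i : ℕ) (f : MvPolynomial (Fin ℓ) ℤ) :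
    swapK ℓ i (algebraMap (MvPolynomial (Fin ℓ) ℤ) (Kf ℓ) f)
      = algebraMap (MvPolynomial (Fin ℓ) ℤ) (Kf ℓ) (swapAlg ℓ i f) := by
  rw [swapK, IsFractionRing.lift_algebraMap]
  rfl

lemma swapAlg_mon {i : ℕ} (h : i + 1 < ℓ) (v : Fin ℓ → ℕ) :
    swapAlg ℓ i (mon v)
      = mon (v ∘ Equiv.swap ⟨i, Nat.lt_of_succ_lt h⟩ ⟨i + 1, h⟩) := by
  have hmap : Finsupp.mapDomain (⇑(Equiv.swap ⟨i, Nat.lt_of_succ_lt h⟩ ⟨i + 1, h⟩)) (F v)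
      = F (v ∘ Equiv.swap ⟨i, Nat.lt_of_succ_lt h⟩ ⟨i + 1, h⟩) := by
    ext j
    rw [Finsupp.mapDomain_equiv_apply]
    simp [F, Equiv.symm_swap]
  rw [swapAlg, dif_pos h, renameEquiv_apply, mon, rename_monomial, hmap]
  rfl

lemma X_sub_ne {p q : Fin ℓ} (hpq : p ≠ q) :
    algebraMap (MvPolynomial (Fin ℓ) ℤ) (Kf ℓ) (X p)
      - algebraMap (MvPolynomial (Fin ℓ) ℤ) (Kf ℓ) (X q) ≠ 0 := by
  rw [← map_sub]
  intro hc
  have := phi_inj (hc.trans (map_zero _).symm)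
  exact hpq (X_injective (sub_eq_zero.1 this))

lemma dem_phi_mon {i : ℕ} (h : i + 1 < ℓ) (v : Fin ℓ → ℕ) :
    dem ℓ i (algebraMap (MvPolynomial (Fin ℓ) ℤ) (Kf ℓ) (mon v))
      = algebraMap (MvPolynomial (Fin ℓ) ℤ) (Kf ℓ)
          (demP ⟨i, Nat.lt_of_succ_lt h⟩ ⟨i + 1, h⟩ v) := by
  set p : Fin ℓ := ⟨i, Nat.lt_of_succ_lt h⟩
  set q : Fin ℓ := ⟨i + 1, h⟩
  have hpq : p ≠ q := by
    intro hc
    have := congrArg Fin.val hc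
    simp [p, q] at this
  rw [dem, Xv_eq (Nat.lt_of_succ_lt h), Xv_eq h, swapK_phi, swapAlg_mon h]
  rw [← map_mul, ← map_mul, ← map_sub, ← demP_identity p q hpq, map_mul, map_sub]
  exact mul_div_cancel_left₀ _ (X_sub_ne hpq)

lemma dem_add (i : ℕ) (f g : Kf ℓ) : dem ℓ i (f + g) = dem ℓ i f + dem ℓ i g := by
  rw [dem, dem, dem, map_add]
  ring

lemma dem_zsmul (i : ℕ) (c : ℤ) (f : Kf ℓ) : dem ℓ i (c • f) = c • dem ℓ i f := by
  rw [dem, dem, zsmul_eq_mul, zsmul_eq_mul, map_mul, map_intCast]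
  ring

noncomputable def demL (ℓ i : ℕ) : Kf ℓ →ₗ[ℤ] Kf ℓ where
  toFun := dem ℓ i
  map_add' := dem_add i
  map_smul' := dem_zsmul i

lemma monomial_eq_smul_mon (e : Fin ℓ →₀ ℕ) (c : ℤ) :
    (monomial e c : MvPolynomial (Fin ℓ) ℤ) = c • mon ⇑e := by
  rw [mon, F_coe, smul_monomial, smul_eq_mul, mul_one]

lemma dem_phi {i : ℕ} (h : i + 1 < ℓ) (Q : MvPolynomial (Fin ℓ) ℤ) :
    dem ℓ i (algebraMap (MvPolynomial (Fin ℓ) ℤ) (Kf ℓ) Q)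
      = algebraMap (MvPolynomial (Fin ℓ) ℤ) (Kf ℓ)
          (∑ e ∈ Q.support, coeff e Q • demP ⟨i, Nat.lt_of_succ_lt h⟩ ⟨i + 1, h⟩ ⇑e) := by
  have : dem ℓ i (algebraMap (MvPolynomial (Fin ℓ) ℤ) (Kf ℓ) Q)
      = demL ℓ i (algebraMap (MvPolynomial (Fin ℓ) ℤ) (Kf ℓ) Q) := rfl
  rw [this]
  conv_lhs => rw [← support_sum_monomial_coeff Q]
  rw [map_sum, map_sum, map_sum]
  apply Finset.sum_congr rfl
  intro e _
  rw [monomial_eq_smul_mon, map_zsmul, map_zsmul, map_zsmul]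
  congr 1
  exact dem_phi_mon h ⇑e

end Transfer

end KeyBasisAux

namespace KeyBasisAux

open Finset MvPolynomial

variable {ℓ : ℕ}

def toN (α : Fin ℓ → ℤ) : Fin ℓ → ℕ := fun i => (α i).toNat

lemma comp_swap_swap (w : Fin ℓ → ℕ) (p q : Fin ℓ) :
    (w ∘ Equiv.swap p q) ∘ Equiv.swap p q = w := by
  funext x
  simp [Equiv.swap_apply_self]

lemma mu_swap {p q : Fin ℓ} (hp : (p : ℕ) + 1 = q) (w : Fin ℓ → ℕ) (hd : w q < w p) :
    μ (w ∘ Equiv.swap p q) = μ w + 1 := by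
  rw [μ, μ, Nsq_swap, invc_swap p q hp w hd, Nat.add_assoc]

lemma monK_phi (α : Fin ℓ → ℤ) (hα : ∀ i, 0 ≤ α i) :
    monK ℓ α = algebraMap (MvPolynomial (Fin ℓ) ℤ) (Kf ℓ) (mon (toN α)) := by
  rw [monK]
  have hfac : ∀ i : Fin ℓ, Xv ℓ ↑i ^ α i
      = algebraMap (MvPolynomial (Fin ℓ) ℤ) (Kf ℓ) (X i ^ toN α i) := by
    intro i
    rw [Xv_eq i.isLt, Fin.eta, map_pow]
    rw [show α i = ((toN α i : ℕ) : ℤ) from (Int.toNat_of_nonneg (hα i)).symm]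
    rw [zpow_natCast]
  rw [Finset.prod_congr rfl (fun i _ => hfac i), ← map_prod]
  congr 1
  rw [mon, monomial_eq, C_1, one_mul]
  rw [Finsupp.prod_fintype _ _ (fun i => pow_zero (X i))]
  rfl

lemma keyAux_good (n : ℕ) : ∀ (α : Fin ℓ → ℤ), (∀ i, 0 ≤ α i) →
    ∃ P : MvPolynomial (Fin ℓ) ℤ,
      algebraMap (MvPolynomial (Fin ℓ) ℤ) (Kf ℓ) P = keyAux ℓ n α ∧
      coeff (F (toN α)) P = 1 ∧
      ∀ e : Fin ℓ →₀ ℕ, coeff e P ≠ 0 → e = F (toN α) ∨ μ ⇑e < μ (toN α) := by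
  induction n with
  | zero =>
    intro α hα
    refine ⟨mon (toN α), (monK_phi α hα).symm, ?_, ?_⟩
    · rw [coeff_mon, if_pos rfl]
    · intro e hc
      left
      by_contra hne
      rw [coeff_mon, if_neg (fun hr => hne hr.symm)] at hc
      exact hc rfl
  | succ n ih =>
    intro α hα
    rw [keyAux]
    by_cases hex : ∃ i : Fin ℓ, ascAt ℓ α (i : ℕ)
    · rw [dif_pos hex]
      obtain ⟨hlt, hasc⟩ := hex.choose_spec
      set i : ℕ := ((hex.choose : Fin ℓ) : ℕ) with hi
      set p : Fin ℓ := ⟨i, Nat.lt_of_succ_lt hlt⟩ with hpdef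
      set q : Fin ℓ := ⟨i + 1, hlt⟩ with hqdef
      have hpq : p ≠ q := by
        intro hc
        have := congrArg Fin.val hc
        simp [hpdef, hqdef] at this
      have hpval : (p : ℕ) + 1 = q := rfl
      have hγ : swapVec ℓ i α = α ∘ Equiv.swap p q := by rw [swapVec, dif_pos hlt]
      have hγnn : ∀ x, 0 ≤ (α ∘ Equiv.swap p q) x := fun x => hα _
      obtain ⟨Q, hQ1, hQ2, hQ3⟩ := ih (α ∘ Equiv.swap p q) hγnn
      set A : Fin ℓ → ℕ := toN α with hA
      set G : Fin ℓ → ℕ := toN (α ∘ Equiv.swap p q) with hG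
      have hGA : G = A ∘ Equiv.swap p q := rfl
      have hAG : A = G ∘ Equiv.swap p q := by rw [hGA, comp_swap_swap]
      have hd : G q < G p := by
        have h1 : G q = (α p).toNat := by
          rw [hGA]; simp [Equiv.swap_apply_right, hA, toN]
        have h2 : G p = (α q).toNat := by
          rw [hGA]; simp [Equiv.swap_apply_left, hA, toN]
        rw [h1, h2]
        rw [Int.toNat_lt_toNat (lt_of_le_of_lt (hα p) hasc)]
        exact hasc
      have hNsqAG : Nsq A = Nsq G := by rw [hAG, Nsq_swap]
      have hmuA : μ A = μ G + 1 := by rw [hAG, mu_swap hpval G hd]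
      rw [hγ, ← hQ1, dem_phi hlt]
      refine ⟨∑ e ∈ Q.support, coeff e Q • demP p q ⇑e, rfl, ?_, ?_⟩
      · rw [coeff_sum]
        have hterm : ∀ e ∈ Q.support, e ≠ F G →
            coeff (F A) (coeff e Q • demP p q ⇑e) = 0 := by
          intro e he hne
          rw [coeff_smul]
          rcases hQ3 e (mem_support_iff.1 he) with h1 | h2
          · exact absurd h1 hne
          · have hz : coeff (F A) (demP p q ⇑e) = 0 := by
              by_contra hc
              rcases demP_coeff_cases hpq ⇑e (F A) hc with hc1 | hc2 | ⟨hc3, hc4⟩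
              · rw [coe_F] at hc1
                have := Nsq_le_of_mu_lt h2
                omega
              · have hAe : A = ⇑e := by rw [← coe_F A, hc2, F_coe]
                rw [← hAe] at h2
                omega
              · have hAe : A = ⇑e ∘ Equiv.swap p q := by rw [← coe_F A, hc4, coe_F]
                have : μ A = μ ⇑e + 1 := by rw [hAe, mu_swap hpval ⇑e hc3]
                omega
            rw [hz, smul_zero]
        rw [Finset.sum_eq_single (F G) hterm]
        · have hco : coeff (F (⇑(F G) ∘ Equiv.swap p q)) (demP p q ⇑(F G)) = 1 :=
            demP_coeff_swap hpq ⇑(F G) (by rw [coe_F]; exact hd)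
          rw [coe_F, ← hAG] at hco
          rw [coeff_smul, hQ2, coe_F, hco, one_smul]
        · intro habs
          rw [coeff_smul, notMem_support_iff.1 habs, zero_smul]
      · intro e hc
        rw [coeff_sum] at hc
        obtain ⟨e', he', hce⟩ := Finset.exists_ne_zero_of_sum_ne_zero hc
        rw [coeff_smul] at hce
        have hdp : coeff e (demP p q ⇑e') ≠ 0 := by
          intro hz; rw [hz, smul_zero] at hce; exact hce rfl
        rcases hQ3 e' (mem_support_iff.1 he') with h1 | h2
        · subst h1
          rcases demP_coeff_cases hpq ⇑(F G) e hdp with hc1 | hc2 | ⟨hc3, hc4⟩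
          · right
            rw [coe_F] at hc1
            exact mu_lt_of_Nsq_lt (by omega)
          · right
            rw [F_coe] at hc2
            have : μ ⇑e = μ G := by rw [hc2, coe_F]
            omega
          · left
            rw [coe_F] at hc4
            rw [hc4, ← hAG]
        · rcases demP_coeff_cases hpq ⇑e' e hdp with hc1 | hc2 | ⟨hc3, hc4⟩
          · right
            have := Nsq_le_of_mu_lt h2
            exact mu_lt_of_Nsq_lt (by omega)
          · right
            have : μ ⇑e = μ ⇑e' := by rw [hc2, coe_F]
            omega
          · right
            have : μ ⇑e = μ ⇑e' + 1 := by rw [hc4, coe_F, mu_swap hpval ⇑e' hc3]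
            omega
    · rw [dif_neg hex]
      refine ⟨mon (toN α), (monK_phi α hα).symm, ?_, ?_⟩
      · rw [coeff_mon, if_pos rfl]
      · intro e hc
        left
        by_contra hne
        rw [coeff_mon, if_neg (fun hr => hne hr.symm)] at hc
        exact hc rfl

end KeyBasisAux

namespace KeyBasisAux

open Finset MvPolynomial

variable {ℓ : ℕ}

lemma keyPoly_good (α : Fin ℓ → ℕ) :
    ∃ P : MvPolynomial (Fin ℓ) ℤ,
      algebraMap (MvPolynomial (Fin ℓ) ℤ) (Kf ℓ) P = keyPoly ℓ (fun i => (α i : ℤ)) ∧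
      coeff (F α) P = 1 ∧
      ∀ e : Fin ℓ →₀ ℕ, coeff e P ≠ 0 → e = F α ∨ μ ⇑e < μ α := by
  have h := keyAux_good (ℓ := ℓ) (ℓ * ℓ) (fun i => (α i : ℤ)) (fun i => Int.natCast_nonneg _)
  have ht : toN (fun i => ((α i : ℤ))) = α := by funext i; simp [toN]
  rw [ht] at h
  exact h

end KeyBasisAux

open KeyBasisAux in
theorem keyPoly_basis' (ℓ : ℕ) :
    LinearIndependent ℤ (fun α : Fin ℓ → ℕ => keyPoly ℓ fun i => (α i : ℤ)) ∧
      ∀ f : MvPolynomial (Fin ℓ) ℤ,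
        algebraMap (MvPolynomial (Fin ℓ) ℤ) (Kf ℓ) f ∈
          Submodule.span ℤ (Set.range fun α : Fin ℓ → ℕ => keyPoly ℓ fun i => (α i : ℤ)) := by
  classical
  choose P hP1 hP2 hP3 using (fun β : Fin ℓ → ℕ => keyPoly_good β)
  constructor
  · rw [linearIndependent_iff]
    intro l hl
    by_contra hne
    have hsupp : l.support.Nonempty := Finsupp.support_nonempty_iff.2 hne
    obtain ⟨α, hαmem, hmax⟩ := Finset.exists_max_image l.support (fun β => μ β) hsupp
    have hzero : algebraMap (MvPolynomial (Fin ℓ) ℤ) (Kf ℓ)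
        (∑ β ∈ l.support, l β • P β) = 0 := by
      rw [map_sum]
      rw [Finsupp.linearCombination_apply, Finsupp.sum] at hl
      rw [← hl]
      apply Finset.sum_congr rfl
      intro β _
      rw [map_zsmul, hP1]
    have hpoly : (∑ β ∈ l.support, l β • P β) = 0 := by
      apply phi_inj
      rw [hzero, map_zero]
    have hco := congrArg (MvPolynomial.coeff (F α)) hpoly
    rw [coeff_sum, coeff_zero] at hco
    rw [Finset.sum_eq_single α] at hco
    · rw [coeff_smul, hP2, smul_eq_mul, mul_one] at hco
      exact (Finsupp.mem_support_iff.1 hαmem) hco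
    · intro β hβ hβne
      have hz : coeff (F α) (P β) = 0 := by
        by_contra hc
        rcases hP3 β (F α) hc with h1 | h2
        · exact hβne (F_inj h1).symm
        · rw [coe_F] at h2
          exact absurd (hmax β hβ) (by omega)
      rw [coeff_smul, hz, smul_zero]
    · intro habs
      exact absurd hαmem habs
  · have hred : ∀ v : Fin ℓ → ℕ,
        algebraMap (MvPolynomial (Fin ℓ) ℤ) (Kf ℓ) (mon v) ∈
          Submodule.span ℤ (Set.range fun α : Fin ℓ → ℕ => keyPoly ℓ fun i => (α i : ℤ)) := by
      have H : ∀ N, ∀ v : Fin ℓ → ℕ, μ v < N →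
          algebraMap (MvPolynomial (Fin ℓ) ℤ) (Kf ℓ) (mon v) ∈
            Submodule.span ℤ (Set.range fun α : Fin ℓ → ℕ => keyPoly ℓ fun i => (α i : ℤ)) := by
        intro N
        induction N with
        | zero => intro v hv; exact absurd hv (Nat.not_lt_zero _)
        | succ N ih =>
          intro v hv
          have hsplit : mon v = P v - (P v - mon v) := by ring
          rw [hsplit, map_sub]
          apply sub_mem
          · rw [hP1 v]
            exact Submodule.subset_span (Set.mem_range_self v)
          · rw [← support_sum_monomial_coeff (P v - mon v), map_sum]
            apply Submodule.sum_mem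
            intro e he
            have hce : coeff e (P v - mon v) ≠ 0 := mem_support_iff.1 he
            rw [coeff_sub] at hce
            have hne : e ≠ F v := by
              intro hc
              subst hc
              rw [hP2 v, coeff_mon, if_pos rfl] at hce
              exact hce (sub_self 1)
            have hmv : coeff e (mon v) = 0 := by
              rw [coeff_mon, if_neg (fun hr => hne hr.symm)]
            rw [hmv, sub_zero] at hce
            rcases hP3 v e hce with h1 | h2
            · exact absurd h1 hne
            · rw [monomial_eq_smul_mon, map_zsmul]
              exact Submodule.smul_mem _ _ (ih ⇑e (by omega))
      exact fun v => H (μ v + 1) v (Nat.lt_succ_self _)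
    intro f
    rw [← support_sum_monomial_coeff f, map_sum]
    apply Submodule.sum_mem
    intro e _
    rw [monomial_eq_smul_mon, map_zsmul]
    exact Submodule.smul_mem _ _ (hred ⇑e)


/-- The key polynomials `κ_α`, for `α` ranging over the weak
compositions `ℤ_{≥0}^ℓ`, form a ℤ-basis of the polynomial ring `ℤ[x_1, …, x_ℓ]`
(realized inside the fraction field): they are ℤ-linearly independent and their
ℤ-span contains (the image of) every polynomial. -/
theorem keyPoly_basis (ℓ : ℕ) :
    LinearIndependent ℤ (fun α : Fin ℓ → ℕ => keyPoly ℓ fun i => (α i : ℤ)) ∧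
      ∀ f : MvPolynomial (Fin ℓ) ℤ,
        algebraMap (MvPolynomial (Fin ℓ) ℤ) (Kf ℓ) f ∈
          Submodule.span ℤ (Set.range fun α : Fin ℓ → ℕ => keyPoly ℓ fun i => (α i : ℤ)) := by
  exact keyPoly_basis' ℓ
end
end
end

section
/- Let γ in Z^ℓ with ∑_{a=k}^{ℓ} γ_a < 0 for some k in [ℓ]. Then the polynomial truncation of the monomial x^γ is zero, i.e., when x^γ is expanded in the basis of key polynomials κ_α (α in Z^ℓ), no α in Z_{≥0}^ℓ appears with nonzero coefficient. -/
/-! Expand each key polynomial `κ_α` in Laurent monomials. Along the Demazure recursion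
`κ_α = π_i κ_{s_i α}` every exponent `β` of `κ_α` stays dominated by `α` (each subset sum of `β`
is at most the sum of `α` over a subset lying above it in the Gale order), and `x^α` itself keeps
coefficient `1`: `π_i x^β` only involves exponents on the segment from `β` to `s_i β`. On tail
subsets `{k, …, ℓ}` domination says that every tail sum of `β` is at most that of `α`.

So the transition from key polynomials to monomials is unitriangular for the tail-sum order.
If `x^γ = ∑ c_α κ_α` had `c_{α₀} ≠ 0` with `α₀ ≥ 0`, then a maximal `α` above `α₀` with
`c_α ≠ 0` contributes `c_α x^α` that nothing cancels, so `α = γ`; but then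
`0 ≤ ∑_{a ≥ k} α₀_a ≤ ∑_{a ≥ k} γ_a < 0`. -/

open MvPolynomial

noncomputable section

open Finset

section Gale

variable {ℓ : ℕ}

def countFrom (S : Finset (Fin ℓ)) (k : ℕ) : ℕ := #(S.filter fun x : Fin ℓ => k ≤ (x : ℕ))

/-- The Gale order: equivalently, `#S = #T` and the `j`-th smallest element of `T` is at least
the `j`-th smallest element of `S` for every `j`. -/
def GaleLE (S T : Finset (Fin ℓ)) : Prop := #S = #T ∧ ∀ k, countFrom S k ≤ countFrom T k

lemma GaleLE.refl (S : Finset (Fin ℓ)) : GaleLE S S := ⟨rfl, fun _ => le_rfl⟩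

lemma countFrom_eq_succ_add (S : Finset (Fin ℓ)) (c : Fin ℓ) :
    countFrom S c = countFrom S (c + 1) + if c ∈ S then 1 else 0 := by
  rw [countFrom, countFrom, card_filter, card_filter, ← sum_ite_eq' S c (fun _ => 1),
    ← sum_add_distrib]
  refine sum_congr rfl fun x _ => ?_
  rcases eq_or_ne x c with rfl | hxc
  · simp
  · have : (x : ℕ) ≠ c := Fin.val_ne_of_ne hxc
    simp only [hxc, if_false]
    split_ifs <;> omega

variable {a b : Fin ℓ}

lemma countFrom_image_swap (hab : (a : ℕ) + 1 = b) (S : Finset (Fin ℓ)) {k : ℕ} (hk : k ≠ b) :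
    countFrom (S.image (Equiv.swap a b)) k = countFrom S k := by
  rw [countFrom, countFrom, card_filter, card_filter, sum_image (Equiv.injective _).injOn]
  refine sum_congr rfl fun x _ => ?_
  rcases eq_or_ne x a with rfl | hxa
  · simp only [Equiv.swap_apply_left]; split_ifs <;> omega
  rcases eq_or_ne x b with rfl | hxb
  · simp only [Equiv.swap_apply_right]; split_ifs <;> omega
  · rw [Equiv.swap_apply_of_ne_of_ne hxa hxb]

lemma countFrom_image_swap_self (hab : (a : ℕ) + 1 = b) (S : Finset (Fin ℓ)) :
    countFrom (S.image (Equiv.swap a b)) b = countFrom S (b + 1) + if a ∈ S then 1 else 0 := by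
  rw [countFrom, countFrom, card_filter, card_filter, sum_image (Equiv.injective _).injOn,
    ← sum_ite_eq' S a (fun _ => 1), ← sum_add_distrib]
  refine sum_congr rfl fun x _ => ?_
  rcases eq_or_ne x a with rfl | hxa
  · simp only [Equiv.swap_apply_left]; split_ifs <;> omega
  rcases eq_or_ne x b with rfl | hxb
  · simp only [Equiv.swap_apply_right]; split_ifs <;> omega
  · rw [Equiv.swap_apply_of_ne_of_ne hxa hxb]
    have : (x : ℕ) ≠ b := Fin.val_ne_of_ne hxb
    split_ifs <;> omega

lemma galeLE_image_swap_or (hab : (a : ℕ) + 1 = b) {S T : Finset (Fin ℓ)}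
    (h : GaleLE S T ∨ GaleLE (S.image (Equiv.swap a b)) T) :
    GaleLE S (T.image (Equiv.swap a b)) ∨ (GaleLE S T ∧ b ∈ T ∧ a ∉ T) := by
  have hinj := Equiv.injective (Equiv.swap a b)
  have hcard : #S = #T := by
    rcases h with h | h
    · exact h.1
    · rw [← h.1, card_image_of_injective _ hinj]
  have hle : ∀ k ≠ (b : ℕ), countFrom S k ≤ countFrom T k := by
    rcases h with h | h
    · exact fun k _ => h.2 k
    · exact fun k hk => countFrom_image_swap hab S hk ▸ h.2 k
  by_cases hb : countFrom S b ≤ countFrom T (b + 1) + if a ∈ T then 1 else 0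
  · refine Or.inl ⟨by rw [card_image_of_injective _ hinj, hcard], fun k => ?_⟩
    rcases eq_or_ne k b with rfl | hkb
    · rwa [countFrom_image_swap_self hab]
    · rw [countFrom_image_swap hab T hkb]; exact hle k hkb
  · -- comparing the counts at `b + 1`, `b` and `a` forces `b ∈ S`, `a ∉ T` and `b ∈ T`
    have hSb := countFrom_eq_succ_add S b
    have hTb := countFrom_eq_succ_add T b
    have hSa := countFrom_eq_succ_add S a
    have hTa := countFrom_eq_succ_add T a
    have hsucc := hle (b + 1) (by omega)
    have hfa := hle a (by omega)
    rw [hab] at hSa hTa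
    refine Or.inr ⟨⟨hcard, fun k => ?_⟩, ?_⟩
    · rcases eq_or_ne k b with rfl | hkb
      · split_ifs at * <;> omega
      · exact hle k hkb
    · split_ifs at * <;> first | omega | exact ⟨‹_›, ‹_›⟩

section Dominated

variable {ℓ : ℕ}

def tailSet (ℓ k : ℕ) : Finset (Fin ℓ) := univ.filter fun a : Fin ℓ => k ≤ (a : ℕ)

/-- The exponents of `κ_α` are dominated by `α`. Unlike the tail-sum inequalities it implies,
domination is preserved by the Demazure steps. -/
def Dominated (β α : Fin ℓ → ℤ) : Prop :=
  ∀ S : Finset (Fin ℓ), ∃ T, GaleLE S T ∧ ∑ x ∈ S, β x ≤ ∑ x ∈ T, α x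

lemma Dominated.refl (α : Fin ℓ → ℤ) : Dominated α α := fun S => ⟨S, .refl S, le_rfl⟩

lemma tailSet_subset_of_galeLE {S T : Finset (Fin ℓ)} {k : ℕ} (hS : tailSet ℓ k ⊆ S)
    (h : GaleLE S T) : tailSet ℓ k ⊆ T := by
  have hfilter : ∀ U : Finset (Fin ℓ), U.filter (fun x : Fin ℓ => k ≤ (x : ℕ)) ⊆ tailSet ℓ k :=
    fun U x hx => by simp_all [tailSet]
  have hS' : S.filter (fun x : Fin ℓ => k ≤ (x : ℕ)) = tailSet ℓ k :=
    (hfilter S).antisymm fun x hx => mem_filter.2 ⟨hS hx, (mem_filter.1 hx).2⟩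
  have hT' : T.filter (fun x : Fin ℓ => k ≤ (x : ℕ)) = tailSet ℓ k :=
    eq_of_subset_of_card_le (hfilter T) (by rw [← hS']; exact h.2 k)
  exact hT' ▸ filter_subset _ _

lemma subset_tailSet_of_galeLE {S T : Finset (Fin ℓ)} {k : ℕ} (hS : S ⊆ tailSet ℓ k)
    (h : GaleLE S T) : T ⊆ tailSet ℓ k := by
  have hS' : S.filter (fun x : Fin ℓ => k ≤ (x : ℕ)) = S :=
    filter_true_of_mem fun x hx => (mem_filter.1 (hS hx)).2
  have hT' : T.filter (fun x : Fin ℓ => k ≤ (x : ℕ)) = T :=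
    eq_of_subset_of_card_le (filter_subset _ _) (by rw [← h.1, ← hS']; exact h.2 k)
  intro x hx
  rw [← hT'] at hx
  simp [tailSet, (mem_filter.1 hx).2]

lemma eq_tailSet_of_galeLE {T : Finset (Fin ℓ)} {k : ℕ} (h : GaleLE (tailSet ℓ k) T) :
    T = tailSet ℓ k :=
  (subset_tailSet_of_galeLE subset_rfl h).antisymm (tailSet_subset_of_galeLE subset_rfl h)

lemma Dominated.sum_tailSet_le {α β : Fin ℓ → ℤ} (h : Dominated β α) (k : ℕ) :
    ∑ x ∈ tailSet ℓ k, β x ≤ ∑ x ∈ tailSet ℓ k, α x := by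
  obtain ⟨T, hT, hle⟩ := h (tailSet ℓ k)
  rwa [eq_tailSet_of_galeLE hT] at hle

lemma mul_nonpos_or_mul_le_mul_of_between {c t : ℤ} (s : ℤ)
    (hc : 0 ≤ c ∧ c ≤ t ∨ t ≤ c ∧ c ≤ 0) : c * s ≤ 0 ∨ c * s ≤ t * s := by
  rcases hc with ⟨hc0, hct⟩ | ⟨htc, hc0⟩ <;> rcases le_total s 0 with hs | hs
  · exact Or.inl (mul_nonpos_of_nonneg_of_nonpos hc0 hs)
  · exact Or.inr (mul_le_mul_of_nonneg_right hct hs)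
  · exact Or.inr (mul_le_mul_of_nonpos_right htc hs)
  · exact Or.inl (mul_nonpos_of_nonpos_of_nonneg hc0 hs)

lemma Dominated.add_zsmul_of_between {α β v : Fin ℓ → ℤ} {c t : ℤ} (h : Dominated β α)
    (h' : Dominated (β + t • v) α) (hc : 0 ≤ c ∧ c ≤ t ∨ t ≤ c ∧ c ≤ 0) :
    Dominated (β + c • v) α := by
  intro S
  have hsum : ∀ s : ℤ, ∑ x ∈ S, (β + s • v) x = ∑ x ∈ S, β x + s * ∑ x ∈ S, v x := by
    intro s
    simp only [Pi.add_apply, Pi.smul_apply, smul_eq_mul, sum_add_distrib, mul_sum]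
  rcases mul_nonpos_or_mul_le_mul_of_between (∑ x ∈ S, v x) hc with hle | hle
  · obtain ⟨T, hT, hs⟩ := h S
    exact ⟨T, hT, by rw [hsum]; linarith⟩
  · obtain ⟨T, hT, hs⟩ := h' S
    exact ⟨T, hT, by rw [hsum] at hs ⊢; linarith⟩

variable {a b : Fin ℓ}

lemma exists_galeLE_sum_swap_le (hab : (a : ℕ) + 1 = b) {α : Fin ℓ → ℤ} (hα : α a ≤ α b)
    {S T : Finset (Fin ℓ)} (h : GaleLE S T ∨ GaleLE (S.image (Equiv.swap a b)) T) :
    ∃ T', GaleLE S T' ∧ ∑ x ∈ T, α (Equiv.swap a b x) ≤ ∑ x ∈ T', α x := by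
  rcases galeLE_image_swap_or hab h with h' | ⟨h', -, haT⟩
  · exact ⟨_, h', (sum_image (Equiv.injective _).injOn).ge⟩
  · refine ⟨T, h', sum_le_sum fun x hx => ?_⟩
    have hxa : x ≠ a := ne_of_mem_of_not_mem hx haT
    rcases eq_or_ne x b with rfl | hxb
    · rwa [Equiv.swap_apply_right]
    · rw [Equiv.swap_apply_of_ne_of_ne hxa hxb]

lemma Dominated.of_comp_swap (hab : (a : ℕ) + 1 = b) {α β : Fin ℓ → ℤ} (hα : α a ≤ α b)
    (h : Dominated β (α ∘ Equiv.swap a b)) :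
    Dominated β α ∧ Dominated (β ∘ Equiv.swap a b) α := by
  constructor
  · intro S
    obtain ⟨T, hST, hsum⟩ := h S
    obtain ⟨T', hST', hle⟩ := exists_galeLE_sum_swap_le hab hα (Or.inl hST)
    exact ⟨T', hST', hsum.trans hle⟩
  · intro S
    obtain ⟨T, hST, hsum⟩ := h (S.image (Equiv.swap a b))
    obtain ⟨T', hST', hle⟩ := exists_galeLE_sum_swap_le hab hα (Or.inr hST)
    refine ⟨T', hST', le_of_eq_of_le ?_ (hsum.trans hle)⟩
    exact (sum_image (Equiv.injective _).injOn).symm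

end Dominated

section SimpleRoot

variable {ℓ : ℕ} {a b : Fin ℓ}

def simpleRoot (a b : Fin ℓ) : Fin ℓ → ℤ := Pi.single a 1 - Pi.single b 1

lemma sum_add_zsmul_simpleRoot (β : Fin ℓ → ℤ) (c : ℤ) (S : Finset (Fin ℓ)) :
    ∑ x ∈ S, (β + c • simpleRoot a b) x =
      ∑ x ∈ S, β x + c * ((if a ∈ S then 1 else 0) - if b ∈ S then 1 else 0) := by
  simp only [simpleRoot, Pi.add_apply, Pi.smul_apply, Pi.sub_apply, smul_eq_mul, mul_sub,
    sum_add_distrib, sum_sub_distrib, ← mul_sum, sum_pi_single']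

lemma comp_swap_eq_add_zsmul_simpleRoot (hab : a ≠ b) (β : Fin ℓ → ℤ) :
    β ∘ Equiv.swap a b = β + (β b - β a) • simpleRoot a b := by
  funext x
  rcases eq_or_ne x a with rfl | hxa
  · simp [simpleRoot, hab.symm]
  rcases eq_or_ne x b with rfl | hxb
  · simp [simpleRoot, hxa]
  · simp [simpleRoot, hxa, hxb, Equiv.swap_apply_of_ne_of_ne]

lemma eq_insert_or_eq_insert_of_galeLE (hab : (a : ℕ) + 1 = b) {T : Finset (Fin ℓ)}
    (h : GaleLE (insert a (tailSet ℓ (b + 1))) T) :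
    T = insert a (tailSet ℓ (b + 1)) ∨ T = insert b (tailSet ℓ (b + 1)) := by
  have haT : a ∉ tailSet ℓ (b + 1) := by simp [tailSet]; omega
  have hsub : tailSet ℓ (b + 1) ⊆ T := tailSet_subset_of_galeLE (subset_insert _ _) h
  have hsup : T ⊆ tailSet ℓ a :=
    subset_tailSet_of_galeLE (insert_subset (by simp [tailSet]) fun x hx => by
      simp only [tailSet, mem_filter, mem_univ, true_and] at hx ⊢; omega) h
  obtain ⟨x, hx⟩ : ∃ x, T \ tailSet ℓ (b + 1) = {x} := card_eq_one.1 <| by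
    rw [card_sdiff_of_subset hsub, ← h.1, card_insert_of_notMem haT, Nat.add_sub_cancel_left]
  have hTx : T = insert x (tailSet ℓ (b + 1)) := by
    rw [← sdiff_union_of_subset hsub, hx, insert_eq]
  have hxT : x ∈ T \ tailSet ℓ (b + 1) := hx ▸ mem_singleton_self x
  have hxa : a ≤ x := by simpa [tailSet] using hsup (mem_sdiff.1 hxT).1
  have hxb : (x : ℕ) < b + 1 := by simpa [tailSet] using (mem_sdiff.1 hxT).2
  rcases (show x = a ∨ x = b by omega) with rfl | rfl
  · exact Or.inl hTx
  · exact Or.inr hTx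

/-- This is what makes the Demazure step unitriangular. -/
lemma eq_of_dominated_add_zsmul_simpleRoot (hab : (a : ℕ) + 1 = b) {α : Fin ℓ → ℤ}
    (hα : α a ≤ α b) {c : ℤ} (h : Dominated (α + c • simpleRoot a b) (α ∘ Equiv.swap a b)) :
    c = α b - α a := by
  have hne : a ≠ b := fun h => by rw [h] at hab; omega
  have hbT : b ∈ tailSet ℓ b := by simp [tailSet]
  have haT : a ∉ tailSet ℓ b := by simp [tailSet]; omega
  have haT' : a ∉ tailSet ℓ (b + 1) := by simp [tailSet]; omega
  have hbT' : b ∉ tailSet ℓ (b + 1) := by simp [tailSet]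
  rw [comp_swap_eq_add_zsmul_simpleRoot hne] at h
  have hlow := h.sum_tailSet_le b
  simp only [sum_add_zsmul_simpleRoot, haT, hbT, if_true, if_false] at hlow
  obtain ⟨T, hT, hup⟩ := h (insert a (tailSet ℓ (b + 1)))
  rcases eq_insert_or_eq_insert_of_galeLE hab hT with rfl | rfl <;>
  · rw [sum_add_zsmul_simpleRoot, sum_add_zsmul_simpleRoot] at hup
    simp only [sum_insert haT', sum_insert hbT', mem_insert, haT', hbT', hne, hne.symm, or_false,
      if_true, if_false] at hup
    linarith

end SimpleRoot

section Monomials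

variable {ℓ : ℕ}

lemma Xv_coe (x : Fin ℓ) : Xv ℓ x = algebraMap (MvPolynomial (Fin ℓ) ℤ) (Kf ℓ) (X x) := by
  rw [Xv, dif_pos x.isLt]

lemma Xv_ne_zero_s12 (x : Fin ℓ) : Xv ℓ x ≠ 0 := by
  rw [Xv_coe, map_ne_zero_iff _ (IsFractionRing.injective _ _)]
  exact X_ne_zero x

lemma monK_add (β γ : Fin ℓ → ℤ) : monK ℓ (β + γ) = monK ℓ β * monK ℓ γ := by
  simp only [monK, Pi.add_apply, zpow_add₀ (Xv_ne_zero_s12 _), prod_mul_distrib]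

lemma monK_zsmul (c : ℤ) (β : Fin ℓ → ℤ) : monK ℓ (c • β) = monK ℓ β ^ c := by
  simp only [monK, Pi.smul_apply, smul_eq_mul, mul_comm c, zpow_mul, prod_zpow]

lemma monK_single (a : Fin ℓ) (n : ℤ) : monK ℓ (Pi.single a n) = Xv ℓ a ^ n := by
  rw [monK, prod_eq_single a (fun x _ hx => by rw [Pi.single_eq_of_ne hx, zpow_zero]) (by simp),
    Pi.single_eq_same]

lemma monK_add_zsmul_simpleRoot (β : Fin ℓ → ℤ) (a b : Fin ℓ) (c : ℤ) :
    monK ℓ (β + c • simpleRoot a b) = monK ℓ β * (Xv ℓ a / Xv ℓ b) ^ c := by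
  rw [monK_add, monK_zsmul, simpleRoot, sub_eq_add_neg, ← Pi.single_neg, monK_add, monK_single,
    monK_single, zpow_one, zpow_neg_one, div_eq_mul_inv]

lemma monK_eq_algebraMap_monomial {β : Fin ℓ → ℤ} (hβ : ∀ x, 0 ≤ β x) :
    monK ℓ β = algebraMap (MvPolynomial (Fin ℓ) ℤ) (Kf ℓ)
      (monomial (Finsupp.equivFunOnFinite.symm fun x => (β x).toNat) 1) := by
  rw [monomial_eq, C_1, one_mul, Finsupp.prod_fintype _ _ fun _ => pow_zero _, map_prod, monK]
  refine prod_congr rfl fun x _ => ?_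
  rw [map_pow, ← Xv_coe, Finsupp.coe_equivFunOnFinite_symm, ← zpow_natCast,
    Int.toNat_of_nonneg (hβ x)]

/-- The Laurent monomials are linearly independent: after multiplying by `x^μ` for a large `μ`,
finitely many of them become distinct monomials of the polynomial ring. -/
theorem linearIndependent_monK : LinearIndependent ℤ (monK ℓ) := by
  rw [linearIndependent_iff']
  intro s g hg
  set μ : Fin ℓ → ℤ := fun x => ∑ β ∈ s, |β x|
  have hμ : ∀ β ∈ s, ∀ x, 0 ≤ (β + μ) x := fun β hβ x => by
    have := single_le_sum (f := fun β : Fin ℓ → ℤ => |β x|) (fun _ _ => abs_nonneg _) hβ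
    simp only [Pi.add_apply, μ]
    linarith [neg_abs_le (β x)]
  set e : (Fin ℓ → ℤ) → (Fin ℓ →₀ ℕ) :=
    fun β => Finsupp.equivFunOnFinite.symm fun x => ((β + μ) x).toNat
  have he : ∀ β ∈ s, ∀ β' ∈ s, e β = e β' → β = β' := fun β hβ β' hβ' h => funext fun x => by
    have := DFunLike.congr_fun h x
    simp only [e, Finsupp.coe_equivFunOnFinite_symm, Pi.add_apply] at this
    have := hμ β hβ x
    have := hμ β' hβ' x
    simp only [Pi.add_apply] at *
    omega
  have hpoly : ∑ β ∈ s, monomial (e β) (g β) = 0 := by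
    refine IsFractionRing.injective (MvPolynomial (Fin ℓ) ℤ) (Kf ℓ) ?_
    rw [map_zero]
    calc algebraMap _ _ (∑ β ∈ s, monomial (e β) (g β))
        = ∑ β ∈ s, g β • monK ℓ (β + μ) := by
          rw [map_sum]
          refine sum_congr rfl fun β hβ => ?_
          rw [monK_eq_algebraMap_monomial (hμ β hβ), ← map_zsmul, smul_monomial, smul_eq_mul,
            mul_one]
      _ = (∑ β ∈ s, g β • monK ℓ β) * monK ℓ μ := by
          simp only [sum_mul, monK_add, smul_mul_assoc]
      _ = 0 := by rw [hg, zero_mul]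
  intro β hβ
  have := congrArg (coeff (e β)) hpoly
  rwa [coeff_sum, sum_eq_single_of_mem β hβ fun β' hβ' hne => by
      rw [coeff_monomial, if_neg fun h => hne (he β' hβ' β hβ h)],
    coeff_monomial, if_pos rfl, coeff_zero] at this

lemma swapK_Xv {i : ℕ} (hi : i + 1 < ℓ) (x : Fin ℓ) :
    swapK ℓ i (Xv ℓ x) = Xv ℓ (Equiv.swap (⟨i, by omega⟩ : Fin ℓ) ⟨i + 1, hi⟩ x) := by
  rw [Xv_coe, swapK, IsFractionRing.lift_algebraMap, RingHom.comp_apply, swapAlg, dif_pos hi,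
    Xv_coe]
  simp [rename_X]

lemma swapK_monK {i : ℕ} (hi : i + 1 < ℓ) (β : Fin ℓ → ℤ) :
    swapK ℓ i (monK ℓ β) = monK ℓ (β ∘ Equiv.swap (⟨i, by omega⟩ : Fin ℓ) ⟨i + 1, hi⟩) := by
  set σ := Equiv.swap (⟨i, by omega⟩ : Fin ℓ) ⟨i + 1, hi⟩
  simp only [monK, map_prod, map_zpow₀, swapK_Xv hi, Function.comp_apply]
  exact Fintype.prod_equiv σ (fun x => Xv ℓ (σ x) ^ β x) (fun x => Xv ℓ x ^ β (σ x))
    fun x => by rw [Equiv.swap_apply_self]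

end Monomials

section Demazure

variable {ℓ : ℕ}

/-- The exponents of `π_{ab} x^β`, with `t = β b - β a`: the string `β, β - r, …, β + t r`
(`r = e_a - e_b`) if `t ≤ 0`, and minus the part of the string strictly between `β` and `β + t r`
if `t > 0`. -/
def demazureMonomial (a b : Fin ℓ) (β : Fin ℓ → ℤ) : (Fin ℓ → ℤ) →₀ ℤ :=
  if β b - β a ≤ 0 then
    ∑ j ∈ range ((β a - β b).toNat + 1), Finsupp.single (β + (-(j : ℤ)) • simpleRoot a b) 1
  else
    -∑ j ∈ range ((β b - β a).toNat - 1), Finsupp.single (β + ((j : ℤ) + 1) • simpleRoot a b) 1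

variable {a b : Fin ℓ}

lemma exists_of_mem_support_demazureMonomial {β γ : Fin ℓ → ℤ}
    (h : γ ∈ (demazureMonomial a b β).support) :
    ∃ c : ℤ, (0 ≤ c ∧ c ≤ β b - β a ∨ β b - β a ≤ c ∧ c ≤ 0) ∧ γ = β + c • simpleRoot a b := by
  unfold demazureMonomial at h
  split_ifs at h with hβ
  · obtain ⟨j, hj, hγ⟩ := mem_biUnion.1 (Finsupp.support_finsetSum h)
    refine ⟨-(j : ℤ), Or.inr ⟨?_, by omega⟩, mem_singleton.1 (Finsupp.support_single_subset hγ)⟩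
    rw [mem_range] at hj
    omega
  · rw [Finsupp.support_neg] at h
    obtain ⟨j, hj, hγ⟩ := mem_biUnion.1 (Finsupp.support_finsetSum h)
    refine ⟨j + 1, Or.inl ⟨by omega, ?_⟩, mem_singleton.1 (Finsupp.support_single_subset hγ)⟩
    rw [mem_range] at hj
    omega

lemma demazureMonomial_apply_comp_swap (hab : a ≠ b) {β : Fin ℓ → ℤ} (hβ : β b ≤ β a) :
    demazureMonomial a b β (β ∘ Equiv.swap a b) = 1 := by
  have hinj : ∀ j j' : ℤ, β + j • simpleRoot a b = β + j' • simpleRoot a b → j = j' :=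
    fun j j' h => by simpa [simpleRoot, hab] using congrFun h a
  rw [comp_swap_eq_add_zsmul_simpleRoot hab, demazureMonomial, if_pos (by omega),
    Finsupp.finsetSum_apply, sum_eq_single_of_mem (β a - β b).toNat (mem_range.2 (by omega)),
    Finsupp.single_apply, if_pos (by rw [Int.toNat_of_nonneg (by omega), neg_sub])]
  intro j _ hj
  rw [Finsupp.single_apply, if_neg fun h => hj (by have := hinj _ _ h; omega)]

lemma linearCombination_demazureMonomial {i : ℕ} (hi : i + 1 < ℓ) (β : Fin ℓ → ℤ) :
    Finsupp.linearCombination ℤ (monK ℓ) (demazureMonomial ⟨i, by omega⟩ ⟨i + 1, hi⟩ β) =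
      dem ℓ i (monK ℓ β) := by
  set a : Fin ℓ := ⟨i, by omega⟩
  set b : Fin ℓ := ⟨i + 1, hi⟩
  have hab : a ≠ b := by simp [a, b, Fin.ext_iff]
  set Y := monK ℓ β
  set xa := Xv ℓ i
  set xb := Xv ℓ (i + 1)
  have hxa : xa ≠ 0 := Xv_ne_zero_s12 a
  have hxb : xb ≠ 0 := Xv_ne_zero_s12 b
  have hsub : xa - xb ≠ 0 := sub_ne_zero.2 fun h => hab <| X_injective <|
    IsFractionRing.injective (MvPolynomial (Fin ℓ) ℤ) (Kf ℓ) (by rwa [← Xv_coe, ← Xv_coe])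
  have hmon : ∀ c : ℤ, monK ℓ (β + c • simpleRoot a b) = Y * (xa / xb) ^ c :=
    monK_add_zsmul_simpleRoot β a b
  rw [dem, swapK_monK hi, comp_swap_eq_add_zsmul_simpleRoot hab, hmon, eq_div_iff hsub,
    demazureMonomial]
  split_ifs with hβ
  · -- geometric series in `xb / xa`
    obtain ⟨m, hm⟩ : ∃ m : ℕ, β b - β a = -m := ⟨(β a - β b).toNat, by omega⟩
    have hgeom := geom_sum_mul_neg (xb / xa) (m + 1)
    have hrel : xa * (xb / xa) - xb = 0 := by field_simp; ring
    rw [map_sum, show (β a - β b).toNat = m by omega]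
    simp only [Finsupp.linearCombination_single, one_smul, hmon, hm, zpow_neg, zpow_natCast,
      ← inv_pow, inv_div, ← mul_sum]
    linear_combination (Y * xa) * hgeom +
      (Y * ∑ j ∈ range (m + 1), (xb / xa) ^ j - Y * (xb / xa) ^ m) * hrel
  · -- geometric series in `xa / xb`
    obtain ⟨m, hm⟩ : ∃ m : ℕ, β b - β a = m + 1 := ⟨(β b - β a).toNat - 1, by omega⟩
    have hgeom := geom_sum_mul (xa / xb) m
    have hrel : xb * (xa / xb) - xa = 0 := by field_simp; ring
    have hG : xa / xb ≠ 0 := div_ne_zero hxa hxb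
    rw [map_neg, map_sum, show (β b - β a).toNat - 1 = m by omega]
    simp only [Finsupp.linearCombination_single, one_smul, hmon, hm, zpow_add_one₀ hG,
      zpow_natCast, ← mul_assoc, ← sum_mul, ← mul_sum]
    linear_combination (-Y * xb * (xa / xb)) * hgeom +
      (Y * (xa / xb) * ∑ j ∈ range m, (xa / xb) ^ j + Y) * hrel

end Demazure

section KeyExpansion

variable {ℓ : ℕ}

def demLinearMap (ℓ i : ℕ) : Kf ℓ →ₗ[ℤ] Kf ℓ := AddMonoidHom.toIntLinearMap
  { toFun := dem ℓ i
    map_zero' := by simp [dem]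
    map_add' := fun f g => by simp only [dem, map_add]; ring }

lemma dem_linearCombination_monK {i : ℕ} (hi : i + 1 < ℓ) (d : (Fin ℓ → ℤ) →₀ ℤ) :
    dem ℓ i (Finsupp.linearCombination ℤ (monK ℓ) d) =
      Finsupp.linearCombination ℤ (monK ℓ)
        (Finsupp.linearCombination ℤ (demazureMonomial ⟨i, by omega⟩ ⟨i + 1, hi⟩) d) := by
  rw [Finsupp.linearCombination_linearCombination]
  simp_rw [linearCombination_demazureMonomial hi]
  exact Finsupp.apply_linearCombination ℤ (demLinearMap ℓ i) (monK ℓ) d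

def IsKeyExpansion (α : Fin ℓ → ℤ) (d : (Fin ℓ → ℤ) →₀ ℤ) : Prop :=
  d α = 1 ∧ ∀ β ∈ d.support, Dominated β α

lemma isKeyExpansion_single (α : Fin ℓ → ℤ) : IsKeyExpansion α (Finsupp.single α 1) :=
  ⟨Finsupp.single_eq_same, fun β hβ => by
    rw [mem_singleton.1 (Finsupp.support_single_subset hβ)]
    exact .refl α⟩

lemma IsKeyExpansion.demazure {a b : Fin ℓ} (hab : (a : ℕ) + 1 = b) {α : Fin ℓ → ℤ}
    (hα : α a < α b) {d : (Fin ℓ → ℤ) →₀ ℤ} (hd : IsKeyExpansion (α ∘ Equiv.swap a b) d) :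
    IsKeyExpansion α (Finsupp.linearCombination ℤ (demazureMonomial a b) d) := by
  have hne : a ≠ b := fun h => by rw [h] at hab; omega
  have hsupp : ∀ γ ∈ (Finsupp.linearCombination ℤ (demazureMonomial a b) d).support,
      ∃ β ∈ d.support, γ ∈ (demazureMonomial a b β).support := fun γ hγ => by
    rw [Finsupp.linearCombination_apply] at hγ
    obtain ⟨β, hβ, hγ⟩ := mem_biUnion.1 (Finsupp.support_sum hγ)
    exact ⟨β, hβ, Finsupp.support_smul hγ⟩
  refine ⟨?_, fun γ hγ => ?_⟩
  · have hcoeff : ∀ β ∈ d.support, β ≠ α ∘ Equiv.swap a b → d β * demazureMonomial a b β α = 0 := by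
      intro β hβ hβne
      by_contra h
      obtain ⟨c, -, hc⟩ := exists_of_mem_support_demazureMonomial
        (Finsupp.mem_support_iff.2 (right_ne_zero_of_mul h))
      have hβα : β = α + (-c) • simpleRoot a b := by rw [hc]; module
      have := eq_of_dominated_add_zsmul_simpleRoot hab hα.le (hβα ▸ hd.2 β hβ)
      exact hβne (by rw [hβα, comp_swap_eq_add_zsmul_simpleRoot hne, this])
    have hmem : α ∘ Equiv.swap a b ∈ d.support := Finsupp.mem_support_iff.2 (by rw [hd.1]; simp)
    rw [Finsupp.linearCombination_apply, Finsupp.sum_apply, Finsupp.sum,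
      sum_eq_single_of_mem _ hmem (by simpa using hcoeff), hd.1, Finsupp.smul_apply, one_smul]
    convert demazureMonomial_apply_comp_swap hne (β := α ∘ Equiv.swap a b) (by simpa using hα.le)
    ext x
    simp
  · obtain ⟨β, hβ, hγβ⟩ := hsupp γ hγ
    obtain ⟨c, hc, rfl⟩ := exists_of_mem_support_demazureMonomial hγβ
    obtain ⟨hβα, hβα'⟩ := (hd.2 β hβ).of_comp_swap hab hα.le
    rw [comp_swap_eq_add_zsmul_simpleRoot hne] at hβα'
    exact hβα.add_zsmul_of_between hβα' hc

lemma exists_isKeyExpansion_keyAux (n : ℕ) (α : Fin ℓ → ℤ) :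
    ∃ d, Finsupp.linearCombination ℤ (monK ℓ) d = keyAux ℓ n α ∧ IsKeyExpansion α d := by
  induction n generalizing α with
  | zero => exact ⟨_, by simp [keyAux], isKeyExpansion_single α⟩
  | succ n ih =>
    rw [keyAux]
    split_ifs with h
    · obtain ⟨hi, hlt⟩ := h.choose_spec
      obtain ⟨d, hd, hexp⟩ := ih (swapVec ℓ h.choose α)
      rw [swapVec, dif_pos hi] at hexp
      exact ⟨_, by rw [← dem_linearCombination_monK hi, hd], hexp.demazure rfl hlt⟩
    · exact ⟨_, by simp, isKeyExpansion_single α⟩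

end KeyExpansion

section Triangularity

variable {ℓ : ℕ}

lemma sum_tailSet_eq_add {k : ℕ} (hk : k < ℓ) (β : Fin ℓ → ℤ) :
    ∑ x ∈ tailSet ℓ k, β x = β ⟨k, hk⟩ + ∑ x ∈ tailSet ℓ (k + 1), β x := by
  have : tailSet ℓ k = insert ⟨k, hk⟩ (tailSet ℓ (k + 1)) := by
    ext x
    simp only [tailSet, mem_filter, mem_univ, true_and, mem_insert, Fin.ext_iff]
    omega
  rw [this, sum_insert (by simp [tailSet])]

lemma eq_of_sum_tailSet_eq {α β : Fin ℓ → ℤ}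
    (h : ∀ k < ℓ, ∑ x ∈ tailSet ℓ k, β x = ∑ x ∈ tailSet ℓ k, α x) : β = α := by
  have hlast : tailSet ℓ ℓ = ∅ := filter_false_of_mem fun x _ => by omega
  have h' : ∀ k ≤ ℓ, ∑ x ∈ tailSet ℓ k, β x = ∑ x ∈ tailSet ℓ k, α x := fun k hk => by
    rcases hk.lt_or_eq with hk | rfl
    · exact h k hk
    · simp [hlast]
  funext x
  rw [← Fin.eta x x.isLt]
  linarith [sum_tailSet_eq_add x.isLt β, sum_tailSet_eq_add x.isLt α, h x x.isLt,
    h' (x + 1) x.isLt]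

lemma exists_tail_le_coeff_eq (dd : (Fin ℓ → ℤ) → (Fin ℓ → ℤ) →₀ ℤ)
    (hdd : ∀ α, IsKeyExpansion α (dd α)) (c : (Fin ℓ → ℤ) →₀ ℤ) {α₀ : Fin ℓ → ℤ}
    (hα₀ : c α₀ ≠ 0) :
    ∃ α, (∀ k, ∑ x ∈ tailSet ℓ k, α₀ x ≤ ∑ x ∈ tailSet ℓ k, α x) ∧ c α ≠ 0 ∧
      Finsupp.linearCombination ℤ dd c α = c α := by
  classical
  set P := c.support.filter fun α => ∀ k, ∑ x ∈ tailSet ℓ k, α₀ x ≤ ∑ x ∈ tailSet ℓ k, α x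
  set rank : (Fin ℓ → ℤ) → ℤ := fun α => ∑ k ∈ range ℓ, ∑ x ∈ tailSet ℓ k, α x
  obtain ⟨α, hαP, hmax⟩ := exists_max_image P rank
    ⟨α₀, mem_filter.2 ⟨Finsupp.mem_support_iff.2 hα₀, fun _ => le_rfl⟩⟩
  obtain ⟨hαc, hα⟩ := mem_filter.1 hαP
  refine ⟨α, hα, Finsupp.mem_support_iff.1 hαc, ?_⟩
  rw [Finsupp.linearCombination_apply, Finsupp.sum_apply, Finsupp.sum,
    sum_eq_single_of_mem α hαc, Finsupp.smul_apply, (hdd α).1, smul_eq_mul, mul_one]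
  intro β hβ hβα
  rw [Finsupp.smul_apply, smul_eq_zero, or_iff_not_imp_left]
  intro _
  by_contra hne
  have hdom := fun k => ((hdd β).2 α (Finsupp.mem_support_iff.2 hne)).sum_tailSet_le k
  have hβP : β ∈ P := mem_filter.2 ⟨hβ, fun k => (hα k).trans (hdom k)⟩
  have hrank := (sum_eq_sum_iff_of_le fun k _ => hdom k).1
    ((sum_le_sum fun k _ => hdom k).antisymm (hmax β hβP))
  exact hβα (eq_of_sum_tailSet_eq fun k hk => (hrank k (mem_range.2 hk)).symm)

end Triangularity

theorem polyTrunc_monomial_eq_zero_general (ℓ : ℕ) (γ : Fin ℓ → ℤ) (k : ℕ)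
    (hneg : (∑ a ∈ Finset.univ.filter fun a : Fin ℓ => k ≤ (a : ℕ), γ a) < 0)
    (c : (Fin ℓ → ℤ) →₀ ℤ) (hc : keyComb ℓ c = monK ℓ γ) :
    ∀ α : Fin ℓ → ℤ, (∀ i, 0 ≤ α i) → c α = 0 := by
  intro α₀ hα₀
  by_contra hc₀
  choose dd hdd hexp using exists_isKeyExpansion_keyAux (ℓ := ℓ) (ℓ * ℓ)
  have hD : Finsupp.linearCombination ℤ dd c = Finsupp.single γ 1 := linearIndependent_monK <| by
    rw [Finsupp.linearCombination_linearCombination, Finsupp.linearCombination_single, one_smul]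
    simp_rw [hdd]
    exact hc
  obtain ⟨α, htail, hcα, hDα⟩ := exists_tail_le_coeff_eq dd hexp c hc₀
  obtain rfl : α = γ := by
    by_contra hne
    rw [hD, Finsupp.single_eq_of_ne hne] at hDα
    exact hcα hDα.symm
  have hnonneg : 0 ≤ ∑ x ∈ tailSet ℓ k, α₀ x := sum_nonneg fun x _ => hα₀ x
  exact (hnonneg.trans (htail k)).not_gt hneg

/-- Let `γ ∈ ℤ^ℓ` with `∑_{a=k}^{ℓ} γ_a < 0` for some `k ∈ [ℓ]`
(0-indexed: the sum of `γ_a` over indices `a ≥ k`, for some `k < ℓ`, is negative).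
Then the polynomial truncation of `x^γ` is zero: in any expansion of the monomial
`x^γ` as a ℤ-linear combination of key polynomials, every `α ∈ ℤ_{≥0}^ℓ` has
coefficient zero. -/
theorem polyTrunc_monomial_eq_zero (ℓ : ℕ) (γ : Fin ℓ → ℤ) (k : ℕ) (hk : k < ℓ)
    (hneg : (∑ a ∈ Finset.univ.filter fun a : Fin ℓ => k ≤ (a : ℕ), γ a) < 0)
    (c : (Fin ℓ → ℤ) →₀ ℤ) (hc : keyComb ℓ c = monK ℓ γ) :
    ∀ α : Fin ℓ → ℤ, (∀ i, 0 ≤ α i) → c α = 0 :=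
  polyTrunc_monomial_eq_zero_general ℓ γ k hneg c hc
end Gale
end
end

section
/- The nonsymmetric Catalan function satisfies the removable-root recurrence: if Ψ is a root ideal in Δ⁺_ℓ, α is a removable root of Ψ (i.e., Ψ∖{α} is still a root ideal), γ ∈ Z^ℓ, and w is in the 0-Hecke monoid of S_ℓ, then H(Ψ; γ; w) = H(Ψ∖{α}; γ; w) + q·H(Ψ; γ + ε_α; w), where ε_{(i,j)} = e_i − e_j. -/
open MvPolynomial

noncomputable section

open Classical in
/-- Polynomial truncation on the Laurent ring: expand `f` in the key-polynomial
basis and keep exactly the terms `κ_α` with `α ∈ ℤ_{≥0}^ℓ` (junk value `0` off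
the Laurent ring). -/
noncomputable def polyTrunc (ℓ : ℕ) (f : Kf ℓ) : Kf ℓ :=
  if h : ∃ c : (Fin ℓ → ℤ) →₀ ℤ, keyComb ℓ c = f then keyCombPos ℓ h.choose else 0

/-- `π_w` for a word `w = [i₁, …, i_m]` in the 0-Hecke monoid of `S_ℓ`:
`π_{i₁} ∘ ⋯ ∘ π_{i_m}`. -/
noncomputable def demWord (ℓ : ℕ) (w : List ℕ) (f : Kf ℓ) : Kf ℓ :=
  w.foldr (fun i g => dem ℓ i g) f

/-- The generating series `∏_{(i,j) ∈ Ψ} (1 - q x_i/x_j)⁻¹ · x^γ`, a power series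
in `q` with Laurent-polynomial coefficients; each factor is expanded as the
geometric series `∑_n q^n (x_i/x_j)^n`. -/
noncomputable def catSeries (ℓ : ℕ) (Ψ : Finset (Fin ℓ × Fin ℓ)) (γ : Fin ℓ → ℤ) :
    PowerSeries (Kf ℓ) :=
  (∏ p ∈ Ψ, PowerSeries.mk fun n => (Xv ℓ (p.1 : ℕ) / Xv ℓ (p.2 : ℕ)) ^ n) *
    PowerSeries.C (monK ℓ γ)

/-- The nonsymmetric Catalan function
`H(Ψ; γ; w) = π_w (poly (∏_{(i,j) ∈ Ψ} (1 - q x_i/x_j)⁻¹ x^γ))`, with `poly` and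
`π_w` applied coefficient-wise in `q`. -/
noncomputable def HCat (ℓ : ℕ) (Ψ : Finset (Fin ℓ × Fin ℓ)) (γ : Fin ℓ → ℤ)
    (w : List ℕ) : PowerSeries (Kf ℓ) :=
  PowerSeries.mk fun n =>
    demWord ℓ w (polyTrunc ℓ (PowerSeries.coeff n (catSeries ℓ Ψ γ)))

/-- A root ideal: an upper order ideal of `Δ⁺_ℓ = {(i,j) : i < j}` for the order
`(a,b) ≤ (c,d) ⟺ a ≥ c ∧ b ≤ d`. -/
def IsRootIdeal (ℓ : ℕ) (Ψ : Finset (Fin ℓ × Fin ℓ)) : Prop :=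
  (∀ p ∈ Ψ, p.1 < p.2) ∧
    ∀ p ∈ Ψ, ∀ q : Fin ℓ × Fin ℓ, q.1 ≤ p.1 → p.2 ≤ q.2 → q ∈ Ψ

/-!
Coefficientwise in `q`, the recurrence is the identity `1/(1 - q r) = 1 + q r/(1 - q r)` for
`r = x_i/x_j`, followed by `poly` and `π_w`. Since `π_w` is additive, everything rests on the
additivity of `poly` on Laurent polynomials, i.e. on the uniqueness and existence of key
expansions. Both follow from unitriangularity, `κ_α = x^α + (lower terms)`, for the strict order
`KeyLT` (dominance of the sorted rearrangements, then number of ascents), whose lower sets are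
finite. Unitriangularity is proved along the recursion `κ_α = π_i κ_{s_i α}`, computing `π_i x^β`
as an explicit geometric sum.
-/

namespace Finsupp

variable {R ι : Type*} [Ring R] [PartialOrder ι]

theorem linearCombination_injective_of_unitriangular (e : ι → ι →₀ R) (he_diag : ∀ a, e a a = 1)
    (he_supp : ∀ a, ∀ b ∈ (e a).support, b ≤ a) :
    Function.Injective (linearCombination R e) := by
  classical
  refine (injective_iff_map_eq_zero _).mpr fun c hc => ?_
  by_contra hne
  obtain ⟨a, ha_mem, ha_max⟩ := c.support.exists_maximal (support_nonempty_iff.mpr hne)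
  have hcoeff : linearCombination R e c a = c a := by
    rw [linearCombination_apply, sum_apply, sum, Finset.sum_eq_single_of_mem a ha_mem]
    · rw [smul_apply, he_diag, smul_eq_mul, mul_one]
    · intro b hb hba
      have hab : a ∉ (e b).support := fun hab =>
        hba ((he_supp b a hab).antisymm' (ha_max hb (he_supp b a hab)))
      rw [smul_apply, notMem_support_iff.mp hab, smul_zero]
  rw [hc, zero_apply] at hcoeff
  exact mem_support_iff.mp ha_mem hcoeff.symm

theorem linearCombination_surjective_of_unitriangular (hfin : ∀ a : ι, (Set.Iio a).Finite)
    (e : ι → ι →₀ R) (he_diag : ∀ a, e a a = 1) (he_supp : ∀ a, ∀ b ∈ (e a).support, b ≤ a) :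
    Function.Surjective (linearCombination R e) := by
  have hwf : WellFounded ((· < ·) : ι → ι → Prop) :=
    Subrelation.wf (fun {b a} hba => Set.ncard_lt_ncard (Set.Iio_ssubset_Iio hba) (hfin a))
      (measure fun a => (Set.Iio a).ncard).wf
  have hsingle : ∀ a, single a (1 : R) ∈ LinearMap.range (linearCombination R e) := by
    intro a
    induction a using hwf.induction with
    | _ a ih =>
    have hlower : e a - single a 1 ∈ LinearMap.range (linearCombination R e) := by
      rw [← sum_single (e a - single a 1)]
      refine Submodule.finsuppSum_mem _ _ _ _ fun b hb => ?_
      have hba : b < a := by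
        by_cases hba : b = a
        · subst hba
          simp [he_diag] at hb
        · rw [sub_apply, single_eq_of_ne hba, sub_zero] at hb
          exact lt_of_le_of_ne (he_supp a b (mem_support_iff.mpr hb)) hba
      rw [← smul_single_one]
      exact Submodule.smul_mem _ _ (ih b hba)
    rw [← sub_sub_cancel (e a) (single a 1)]
    exact Submodule.sub_mem _ ⟨single a 1, by simp⟩ hlower
  rw [← LinearMap.range_eq_top, eq_top_iff, ← supported_univ, supported_eq_span_single,
    Set.image_univ]
  exact Submodule.span_le.mpr (Set.range_subset_iff.mpr hsingle)

end Finsupp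

namespace PowerSeries

lemma mk_pow_eq_one_add_X_mul {R : Type*} [CommRing R] (r : R) :
    mk (r ^ ·) = 1 + X * (C r * mk (r ^ ·)) := by
  ext (_ | n)
  · simp
  · rw [map_add, coeff_succ_X_mul, coeff_C_mul, coeff_mk,
      coeff_mk, coeff_one, if_neg n.succ_ne_zero, zero_add, pow_succ']

end PowerSeries

section DividedDifference

open Finset

variable {K : Type*} [Field K] {u v : K}

lemma divided_difference_zpow_of_le (hu : u ≠ 0) (hv : v ≠ 0) (huv : u ≠ v) {b c : ℤ}
    (hcb : c ≤ b) :
    (u * (u ^ b * v ^ c) - v * (u ^ c * v ^ b)) / (u - v) =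
      ∑ t ∈ range ((b - c).toNat + 1), u ^ (c + t) * v ^ (b - t) := by
  obtain ⟨d, rfl⟩ : ∃ d : ℕ, b = c + d := ⟨(b - c).toNat, by omega⟩
  have hterm : ∀ t ∈ range (d + 1),
      u ^ (c + t) * v ^ (c + d - t) = u ^ c * v ^ c * (u ^ t * v ^ (d + 1 - 1 - t)) := by
    intro t ht
    have : (c + d - t : ℤ) = c + ((d + 1 - 1 - t : ℕ) : ℤ) := by have := mem_range.mp ht; omega
    rw [this, zpow_add₀ hu, zpow_add₀ hv, zpow_natCast, zpow_natCast]
    ring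
  rw [show (c + d - c).toNat = d by omega, div_eq_iff (sub_ne_zero.mpr huv), sum_congr rfl hterm,
    ← mul_sum, mul_assoc, geom_sum₂_mul, zpow_add₀ hu, zpow_add₀ hv, zpow_natCast, zpow_natCast]
  ring

lemma divided_difference_zpow_of_lt (hu : u ≠ 0) (hv : v ≠ 0) (huv : u ≠ v) {b c : ℤ}
    (hbc : b < c) :
    (u * (u ^ b * v ^ c) - v * (u ^ c * v ^ b)) / (u - v) =
      -∑ t ∈ range (c - b - 1).toNat, u ^ (b + 1 + t) * v ^ (c - 1 - t) := by
  obtain ⟨e, rfl⟩ : ∃ e : ℕ, c = b + 1 + e := ⟨(c - b - 1).toNat, by omega⟩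
  have hterm : ∀ t ∈ range e,
      u ^ (b + 1 + t) * v ^ (b + 1 + e - 1 - t) =
        u ^ (b + 1) * v ^ (b + 1) * (u ^ t * v ^ (e - 1 - t)) := by
    intro t ht
    have : (b + 1 + e - 1 - t : ℤ) = b + 1 + ((e - 1 - t : ℕ) : ℤ) := by
      have := mem_range.mp ht; omega
    rw [this, zpow_add₀ hu, zpow_add₀ hv, zpow_natCast, zpow_natCast]
    ring
  rw [show (b + 1 + e - b - 1).toNat = e by omega, div_eq_iff (sub_ne_zero.mpr huv),
    sum_congr rfl hterm, ← mul_sum, neg_mul, mul_assoc, geom_sum₂_mul, zpow_add₀ hu,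
    zpow_add₀ hv, zpow_add₀ hu, zpow_add₀ hv, zpow_one, zpow_one, zpow_natCast, zpow_natCast]
  ring

end DividedDifference

namespace NonsymCatalan

open Finset

variable {ℓ : ℕ}

lemma Xv_coe (j : Fin ℓ) : Xv ℓ j = algebraMap (MvPolynomial (Fin ℓ) ℤ) (Kf ℓ) (X j) :=
  dif_pos j.isLt

lemma Xv_ne_zero (i : ℕ) : Xv ℓ i ≠ 0 := by
  unfold Xv
  split
  · exact (map_ne_zero_iff _ (IsFractionRing.injective _ _)).mpr (X_ne_zero _)
  · exact one_ne_zero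

lemma Xv_injective : Function.Injective fun j : Fin ℓ => Xv ℓ j := fun j k h => by
  simp only [Xv_coe] at h
  exact X_injective (IsFractionRing.injective (MvPolynomial (Fin ℓ) ℤ) (Kf ℓ) h)

lemma swapK_Xv {i : ℕ} (h : i + 1 < ℓ) (j : Fin ℓ) :
    swapK ℓ i (Xv ℓ j) = Xv ℓ (Equiv.swap (⟨i, by omega⟩ : Fin ℓ) ⟨i + 1, h⟩ j) := by
  rw [Xv_coe, swapK, IsFractionRing.lift_algebraMap, Xv_coe]
  simp [swapAlg, dif_pos h, rename_X]

def demLinear (ℓ i : ℕ) : Kf ℓ →ₗ[ℤ] Kf ℓ where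
  toFun := dem ℓ i
  map_add' f g := by simp only [dem, map_add]; ring
  map_smul' k f := by simp only [dem, zsmul_eq_mul, map_mul, map_intCast, RingHom.id_apply]; ring

lemma demWord_add (w : List ℕ) (f g : Kf ℓ) :
    demWord ℓ w (f + g) = demWord ℓ w f + demWord ℓ w g := by
  induction w with
  | nil => rfl
  | cons i w ih => exact (congrArg (dem ℓ i) ih).trans ((demLinear ℓ i).map_add _ _)

lemma monK_zero : monK ℓ 0 = 1 := prod_eq_one fun _ _ => zpow_zero _

lemma monK_add (α β : Fin ℓ → ℤ) : monK ℓ (α + β) = monK ℓ α * monK ℓ β := by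
  simp only [monK, Pi.add_apply, ← prod_mul_distrib, zpow_add₀ (Xv_ne_zero _)]

lemma monK_sub (α β : Fin ℓ → ℤ) : monK ℓ (α - β) = monK ℓ α / monK ℓ β := by
  simp only [monK, Pi.sub_apply, ← prod_div_distrib, zpow_sub₀ (Xv_ne_zero _)]

lemma monK_single (j : Fin ℓ) (k : ℤ) : monK ℓ (Pi.single j k) = Xv ℓ j ^ k := by
  rw [monK, prod_eq_single j (fun b _ hb => by rw [Pi.single_eq_of_ne hb, zpow_zero])
    (by simp), Pi.single_eq_same]

lemma monK_eq_algebraMap_monomial (α : Fin ℓ → ℤ) (hα : ∀ i, 0 ≤ α i) :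
    monK ℓ α = algebraMap (MvPolynomial (Fin ℓ) ℤ) (Kf ℓ)
      (monomial (Finsupp.equivFunOnFinite.symm fun i => (α i).toNat) 1) := by
  rw [← prod_X_pow_eq_monomial, map_prod, monK]
  refine (prod_subset (subset_univ _) fun j _ hj => ?_).trans
    (prod_congr rfl fun j _ => ?_) |>.symm
  · rw [Finsupp.notMem_support_iff.mp hj, pow_zero, map_one]
  · rw [map_pow, ← Xv_coe, ← zpow_natCast, Finsupp.coe_equivFunOnFinite_symm,
      Int.toNat_of_nonneg (hα j)]

/-- Laurent polynomials in `x_0, …, x_{ℓ-1}`, as coefficient functions on exponent vectors. -/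
abbrev L (ℓ : ℕ) := (Fin ℓ → ℤ) →₀ ℤ

def laurent (ℓ : ℕ) : L ℓ →ₗ[ℤ] Kf ℓ := Finsupp.linearCombination ℤ (monK ℓ)

lemma laurent_single (α : Fin ℓ → ℤ) (k : ℤ) :
    laurent ℓ (Finsupp.single α k) = k • monK ℓ α :=
  Finsupp.linearCombination_single _ _ _

lemma laurent_mul_monK (c : L ℓ) (v : Fin ℓ → ℤ) :
    laurent ℓ c * monK ℓ v = laurent ℓ (c.mapDomain (· + v)) := by
  rw [laurent, Finsupp.linearCombination_mapDomain, Finsupp.linearCombination_apply,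
    Finsupp.linearCombination_apply, Finsupp.sum_mul]
  simp only [Function.comp_apply, monK_add, smul_mul_assoc]

lemma eq_zero_of_laurent_eq_zero_of_nonneg (c : L ℓ) (hc : ∀ β ∈ c.support, ∀ j, 0 ≤ β j)
    (h0 : laurent ℓ c = 0) : c = 0 := by
  classical
  let d : (Fin ℓ → ℤ) → (Fin ℓ →₀ ℕ) := fun β =>
    Finsupp.equivFunOnFinite.symm fun j => (β j).toNat
  have hd : Set.InjOn d c.support := fun β hβ β' hβ' h => funext fun j => by
    have := DFunLike.congr_fun h j
    simp only [d, Finsupp.coe_equivFunOnFinite_symm] at this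
    have := hc β hβ j
    have := hc β' hβ' j
    omega
  let P : MvPolynomial (Fin ℓ) ℤ := ∑ β ∈ c.support, monomial (d β) (c β)
  have hP : algebraMap _ (Kf ℓ) P = laurent ℓ c := by
    rw [map_sum, laurent, Finsupp.linearCombination_apply, Finsupp.sum]
    refine sum_congr rfl fun β hβ => ?_
    rw [monK_eq_algebraMap_monomial β (hc β hβ), ← map_zsmul, smul_monomial, smul_eq_mul, mul_one]
  have hP0 : P = 0 := IsFractionRing.injective _ (Kf ℓ) (by rw [hP, h0, map_zero])
  ext β
  by_contra hβ
  have hcoeff : coeff (d β) P = c β := by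
    rw [coeff_sum, sum_eq_single_of_mem β (Finsupp.mem_support_iff.mpr hβ)]
    · rw [coeff_monomial, if_pos rfl]
    · intro β' hβ' hne
      rw [coeff_monomial, if_neg fun h => hne (hd hβ' (Finsupp.mem_support_iff.mpr hβ) h)]
  rw [hP0, coeff_zero] at hcoeff
  exact hβ hcoeff.symm

/-- Shifting by a large monomial reduces this to ordinary polynomials. -/
lemma laurent_injective : Function.Injective (laurent ℓ) := by
  classical
  refine (injective_iff_map_eq_zero _).mpr fun c hc => ?_
  let N : ℕ := c.support.sup fun β => univ.sup fun j => (-β j).toNat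
  have hN : ∀ β ∈ c.support, ∀ j, 0 ≤ β j + (N : ℤ) := fun β hβ j => by
    have : (-β j).toNat ≤ N := by
      exact_mod_cast (le_sup (f := fun j => (-β j).toNat) (mem_univ j)).trans
        (le_sup (f := fun β => univ.sup fun j => (-β j).toNat) hβ)
    omega
  let v : Fin ℓ → ℤ := fun _ => N
  have hshift : c.mapDomain (· + v) = 0 := by
    refine eq_zero_of_laurent_eq_zero_of_nonneg _ (fun γ hγ j => ?_) ?_
    · obtain ⟨β, hβ, rfl⟩ := mem_image.mp (Finsupp.mapDomain_support hγ)
      exact hN β hβ j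
    · rw [← laurent_mul_monK, hc, zero_mul]
  exact Finsupp.mapDomain_injective (add_left_injective v)
    (hshift.trans Finsupp.mapDomain_zero.symm)

/-- `∑ⱼ (βⱼ - x)⁺`. For vectors of equal sum, comparing these for all `x` is the dominance
order on their decreasing rearrangements. -/
def excess (x : ℤ) (β : Fin ℓ → ℤ) : ℤ := ∑ j, max (β j - x) 0

def ascents (β : Fin ℓ → ℤ) : ℕ := #{p : Fin ℓ × Fin ℓ | p.1 < p.2 ∧ β p.1 < β p.2}

/-- The strict order in which key polynomials are unitriangular over Laurent monomials:
smaller in dominance, or a rearrangement with fewer ascents. -/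
def KeyLT (β α : Fin ℓ → ℤ) : Prop :=
  ∑ j, β j = ∑ j, α j ∧ (∀ x, excess x β ≤ excess x α) ∧
    ((∀ x, excess x β = excess x α) → ascents β < ascents α)

lemma KeyLT.trans {α β γ : Fin ℓ → ℤ} (h₁ : KeyLT α β) (h₂ : KeyLT β γ) : KeyLT α γ := by
  refine ⟨h₁.1.trans h₂.1, fun x => (h₁.2.1 x).trans (h₂.2.1 x), fun heq => ?_⟩
  have hβγ : ∀ x, excess x β = excess x γ := fun x =>
    (h₂.2.1 x).antisymm (heq x ▸ h₁.2.1 x)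
  exact (h₁.2.2 fun x => (heq x).trans (hβγ x).symm).trans (h₂.2.2 hβγ)

lemma KeyLT.irrefl (α : Fin ℓ → ℤ) : ¬ KeyLT α α := fun h => (h.2.2 fun _ => rfl).false

instance : IsStrictOrder (Fin ℓ → ℤ) KeyLT where
  irrefl := KeyLT.irrefl
  trans _ _ _ := KeyLT.trans

/-- Each entry of `β` is at most `excess 0 α`, and the sum then bounds it from below. -/
lemma setOf_keyLT_finite (α : Fin ℓ → ℤ) : {β | KeyLT β α}.Finite := by
  let M := max (excess 0 α) 0
  refine (Set.finite_Icc (fun _ => ∑ j, α j - ℓ * M) fun _ => M).subset ?_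
  rintro β ⟨hsum, hexc, -⟩
  have hle : ∀ j, β j ≤ M := fun j =>
    (le_max_left _ _).trans <| (sub_zero (β j) ▸ single_le_sum (f := fun j => max (β j - 0) 0)
      (fun _ _ => le_max_right _ _) (mem_univ j)).trans ((hexc 0).trans (le_max_left _ _))
  refine ⟨fun j => ?_, hle⟩
  have hrest : ∑ k ∈ univ.erase j, β k ≤ ℓ * M := by
    refine (sum_le_card_nsmul _ _ M fun k _ => hle k).trans ?_
    rw [nsmul_eq_mul]
    exact mul_le_mul_of_nonneg_right (by simp) (le_max_right _ _)
  have := add_sum_erase univ β (mem_univ j)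
  simp only at hsum ⊢
  omega

lemma excess_comp_perm (σ : Equiv.Perm (Fin ℓ)) (β : Fin ℓ → ℤ) (x : ℤ) :
    excess x (β ∘ σ) = excess x β :=
  Equiv.sum_comp σ fun j => max (β j - x) 0

def IsUnitriangularAt (c : L ℓ) (α : Fin ℓ → ℤ) : Prop :=
  c α = 1 ∧ ∀ β ∈ c.support, β = α ∨ KeyLT β α

lemma isUnitriangularAt_single (α : Fin ℓ → ℤ) : IsUnitriangularAt (Finsupp.single α 1) α :=
  ⟨Finsupp.single_eq_same, fun _ hβ => .inl (mem_singleton.mp (Finsupp.support_single_subset hβ))⟩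

section Transposition

variable {i : ℕ} (h : i + 1 < ℓ)

def lo : Fin ℓ := ⟨i, by omega⟩

def hi : Fin ℓ := ⟨i + 1, h⟩

lemma lo_ne_hi : lo h ≠ hi h := by simp [lo, hi, Fin.ext_iff]

lemma lo_lt_hi : lo h < hi h := by simp [lo, hi, Fin.lt_def]

def setPair (β : Fin ℓ → ℤ) (x y : ℤ) : Fin ℓ → ℤ :=
  Function.update (Function.update β (lo h) x) (hi h) y

def rest : Finset (Fin ℓ) := (univ.erase (lo h)).erase (hi h)

variable {h}

lemma setPair_lo (β : Fin ℓ → ℤ) (x y : ℤ) : setPair h β x y (lo h) = x := by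
  simp [setPair, lo_ne_hi h]

lemma setPair_hi (β : Fin ℓ → ℤ) (x y : ℤ) : setPair h β x y (hi h) = y := by
  simp [setPair]

lemma setPair_of_mem_rest (β : Fin ℓ → ℤ) (x y : ℤ) {j : Fin ℓ} (hj : j ∈ rest h) :
    setPair h β x y j = β j := by
  obtain ⟨hjhi, hjlo⟩ : j ≠ hi h ∧ j ≠ lo h := by simpa [rest] using hj
  simp [setPair, hjhi, hjlo]

lemma setPair_self (β : Fin ℓ → ℤ) : setPair h β (β (lo h)) (β (hi h)) = β := by
  simp [setPair]

lemma swapVec_eq_comp (h : i + 1 < ℓ) (α : Fin ℓ → ℤ) :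
    swapVec ℓ i α = α ∘ Equiv.swap (lo h) (hi h) :=
  dif_pos h

lemma swapVec_eq_setPair (h : i + 1 < ℓ) (α : Fin ℓ → ℤ) :
    swapVec ℓ i α = setPair h α (α (hi h)) (α (lo h)) := by
  ext j
  rw [swapVec_eq_comp h, Function.comp_apply, Equiv.swap_apply_def, setPair]
  by_cases hjlo : j = lo h
  · simp [hjlo, lo_ne_hi h]
  · by_cases hjhi : j = hi h <;> simp [hjlo, hjhi, (lo_ne_hi h).symm]

lemma swapVec_swapVec (h : i + 1 < ℓ) (α : Fin ℓ → ℤ) : swapVec ℓ i (swapVec ℓ i α) = α := by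
  ext j
  simp [swapVec_eq_comp h]

@[to_additive]
lemma prod_eq_mul_prod_rest {M : Type*} [CommMonoid M] (g : Fin ℓ → M) :
    ∏ j, g j = g (lo h) * g (hi h) * ∏ j ∈ rest h, g j := by
  rw [rest, mul_assoc, mul_prod_erase _ g (mem_erase.mpr ⟨(lo_ne_hi h).symm, mem_univ _⟩),
    mul_prod_erase _ g (mem_univ _)]

lemma sum_setPair (β : Fin ℓ → ℤ) (x y : ℤ) (g : ℤ → ℤ) :
    ∑ j, g (setPair h β x y j) = g x + g y + ∑ j ∈ rest h, g (β j) := by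
  rw [sum_eq_add_sum_rest (h := h), setPair_lo, setPair_hi]
  congr 1
  exact sum_congr rfl fun j hj => by rw [setPair_of_mem_rest β x y hj]

/-- Moving two entries towards each other, keeping their sum, goes down in dominance. -/
lemma excess_setPair_le (β : Fin ℓ → ℤ) {t : ℤ}
    (ht₁ : β (lo h) ≤ t ∨ β (hi h) ≤ t) (ht₂ : t ≤ β (lo h) ∨ t ≤ β (hi h)) (x : ℤ) :
    excess x (setPair h β t (β (lo h) + β (hi h) - t)) ≤ excess x β := by
  rw [excess, excess, sum_setPair β _ _ fun z => max (z - x) 0,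
    sum_eq_add_sum_rest (h := h) fun j => max (β j - x) 0]
  omega

lemma eq_or_eq_of_excess_setPair_eq (β : Fin ℓ → ℤ) {t : ℤ}
    (ht₁ : β (lo h) ≤ t ∨ β (hi h) ≤ t) (ht₂ : t ≤ β (lo h) ∨ t ≤ β (hi h))
    (heq : ∀ x, excess x (setPair h β t (β (lo h) + β (hi h) - t)) = excess x β) :
    t = β (lo h) ∨ t = β (hi h) := by
  by_contra hne
  have := heq (max t (β (lo h) + β (hi h) - t))
  rw [excess, excess, sum_setPair β _ _ fun z => max (z - _) 0,
    sum_eq_add_sum_rest (h := h) fun j => max (β j - _) 0] at this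
  omega

lemma sum_setPair_eq (β : Fin ℓ → ℤ) (t : ℤ) :
    ∑ j, setPair h β t (β (lo h) + β (hi h) - t) j = ∑ j, β j := by
  have := sum_setPair (h := h) β t (β (lo h) + β (hi h) - t) id
  simp only [id] at this
  rw [this, sum_eq_add_sum_rest (h := h) β]
  ring

lemma sum_swapVec (h : i + 1 < ℓ) (α : Fin ℓ → ℤ) : ∑ j, swapVec ℓ i α j = ∑ j, α j := by
  rw [swapVec_eq_comp h]
  exact Equiv.sum_comp _ α

lemma excess_swapVec (h : i + 1 < ℓ) (α : Fin ℓ → ℤ) (x : ℤ) :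
    excess x (swapVec ℓ i α) = excess x α := by
  rw [swapVec_eq_comp h, excess_comp_perm]

lemma val_swap (p : Fin ℓ) : (Equiv.swap (lo h) (hi h) p : ℕ) =
    if (p : ℕ) = i then i + 1 else if (p : ℕ) = i + 1 then i else p := by
  rw [Equiv.swap_apply_def]
  split_ifs <;> simp_all [Fin.ext_iff, lo, hi]

lemma swap_lt_swap_iff {p q : Fin ℓ} (hpq : (p, q) ≠ (lo h, hi h))
    (hqp : (p, q) ≠ (hi h, lo h)) :
    Equiv.swap (lo h) (hi h) p < Equiv.swap (lo h) (hi h) q ↔ p < q := by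
  simp only [ne_eq, Prod.mk.injEq, Fin.ext_iff, lo, hi] at hpq hqp
  rw [Fin.lt_def, Fin.lt_def, val_swap, val_swap]
  split_ifs <;> omega

/-- The adjacent transposition preserves the relative order of every other pair of positions. -/
lemma ascents_eq_ascents_swapVec_add_one (α : Fin ℓ → ℤ) (hasc : α (lo h) < α (hi h)) :
    ascents α = ascents (swapVec ℓ i α) + 1 := by
  let f : Fin ℓ × Fin ℓ → ℕ := fun p => if p.1 < p.2 ∧ α p.1 < α p.2 then 1 else 0
  let g : Fin ℓ × Fin ℓ → ℕ := fun p =>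
    if Equiv.swap (lo h) (hi h) p.1 < Equiv.swap (lo h) (hi h) p.2 ∧ α p.1 < α p.2 then 1 else 0
  have hg : ascents (swapVec ℓ i α) = ∑ p, g p := by
    rw [ascents, card_filter, swapVec_eq_comp h]
    exact Fintype.sum_equiv ((Equiv.swap (lo h) (hi h)).prodCongr (Equiv.swap (lo h) (hi h))) _ _
      fun p => by simp [g]
  have hfg : ∀ p ∈ univ.erase (lo h, hi h), f p = g p := by
    rintro ⟨p, q⟩ hp
    by_cases hqp : (p, q) = (hi h, lo h)
    · simp only [Prod.mk.injEq] at hqp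
      obtain ⟨rfl, rfl⟩ := hqp
      simp [f, g, (lo_lt_hi h).not_gt, hasc.not_gt]
    · simp only [f, g, swap_lt_swap_iff (ne_of_mem_erase hp) hqp]
  rw [ascents, card_filter, hg]
  change ∑ p, f p = ∑ p, g p + 1
  rw [← add_sum_erase _ f (mem_univ (lo h, hi h)), ← add_sum_erase _ g (mem_univ (lo h, hi h)),
    sum_congr rfl hfg]
  simp [f, g, lo_lt_hi h, (lo_lt_hi h).le, hasc, add_comm]

lemma swapK_monK (h : i + 1 < ℓ) (β : Fin ℓ → ℤ) :
    swapK ℓ i (monK ℓ β) = monK ℓ (swapVec ℓ i β) := by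
  rw [monK, map_prod, swapVec_eq_comp h, monK]
  refine (prod_congr rfl fun j _ => by rw [map_zpow₀, swapK_Xv h]).trans
    (Fintype.prod_equiv (Equiv.swap (lo h) (hi h)) _ _ fun j => ?_)
  simp [lo, hi]

lemma monK_setPair (β : Fin ℓ → ℤ) (x y : ℤ) :
    monK ℓ (setPair h β x y) = Xv ℓ i ^ x * Xv ℓ (i + 1) ^ y * ∏ j ∈ rest h, Xv ℓ j ^ β j := by
  rw [monK, prod_eq_mul_prod_rest (h := h), setPair_lo, setPair_hi]
  exact congrArg _ (prod_congr rfl fun j hj => by rw [setPair_of_mem_rest β x y hj])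

variable (h) in
/-- The Laurent expansion of `π_i x^β`: the divided difference telescopes into a geometric
sum in `x_i, x_{i+1}`, with a sign when `β` has an ascent at `i`. -/
def demMon (β : Fin ℓ → ℤ) : L ℓ :=
  if β (hi h) ≤ β (lo h) then
    ∑ t ∈ range ((β (lo h) - β (hi h)).toNat + 1),
      Finsupp.single (setPair h β (β (hi h) + t) (β (lo h) - t)) 1
  else
    -∑ t ∈ range ((β (hi h) - β (lo h) - 1).toNat),
      Finsupp.single (setPair h β (β (lo h) + 1 + t) (β (hi h) - 1 - t)) 1

lemma dem_monK (β : Fin ℓ → ℤ) : dem ℓ i (monK ℓ β) = laurent ℓ (demMon h β) := by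
  have hu : Xv ℓ i ≠ 0 := Xv_ne_zero i
  have hv : Xv ℓ (i + 1) ≠ 0 := Xv_ne_zero (i + 1)
  have huv : Xv ℓ i ≠ Xv ℓ (i + 1) := Xv_injective.ne (lo_ne_hi h)
  have hβ := monK_setPair (h := h) β (β (lo h)) (β (hi h))
  rw [setPair_self] at hβ
  rw [dem, swapK_monK h, swapVec_eq_setPair h, monK_setPair, hβ]
  set R := ∏ j ∈ rest h, Xv ℓ j ^ β j
  rw [show ∀ b c : ℤ, Xv ℓ i * (Xv ℓ i ^ b * Xv ℓ (i + 1) ^ c * R) -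
      Xv ℓ (i + 1) * (Xv ℓ i ^ c * Xv ℓ (i + 1) ^ b * R) =
      (Xv ℓ i * (Xv ℓ i ^ b * Xv ℓ (i + 1) ^ c) - Xv ℓ (i + 1) * (Xv ℓ i ^ c * Xv ℓ (i + 1) ^ b))
        * R from fun _ _ => by ring, mul_div_right_comm]
  unfold demMon
  split_ifs with hcb
  · rw [divided_difference_zpow_of_le hu hv huv hcb, sum_mul, map_sum]
    exact sum_congr rfl fun t _ => by rw [laurent_single, one_smul, monK_setPair]
  · rw [divided_difference_zpow_of_lt hu hv huv (not_le.mp hcb), neg_mul, sum_mul, map_neg,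
      map_sum]
    exact congrArg _ (sum_congr rfl fun t _ => by rw [laurent_single, one_smul, monK_setPair])

lemma exists_of_mem_support_demMon {β γ : Fin ℓ → ℤ} (hγ : γ ∈ (demMon h β).support) :
    ∃ t, γ = setPair h β t (β (lo h) + β (hi h) - t) ∧
      (β (lo h) ≤ t ∨ β (hi h) ≤ t) ∧ (t ≤ β (lo h) ∨ t ≤ β (hi h)) ∧
      (β (lo h) < β (hi h) → β (lo h) < t ∧ t < β (hi h)) := by
  classical
  unfold demMon at hγ
  split_ifs at hγ with hcb
  · obtain ⟨t, ht, hγt⟩ := mem_biUnion.mp (Finsupp.support_finsetSum hγ)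
    rw [Finsupp.support_single _ one_ne_zero, mem_singleton] at hγt
    have := mem_range.mp ht
    exact ⟨β (hi h) + t, by rw [hγt]; congr 1; ring, by omega, by omega, by omega⟩
  · rw [Finsupp.support_neg] at hγ
    obtain ⟨t, ht, hγt⟩ := mem_biUnion.mp (Finsupp.support_finsetSum hγ)
    rw [Finsupp.support_single _ one_ne_zero, mem_singleton] at hγt
    have := mem_range.mp ht
    exact ⟨β (lo h) + 1 + t, by rw [hγt]; congr 1; ring, by omega, by omega, fun _ => by omega⟩

lemma setPair_eq_or_eq_swapVec_of_excess_eq (β : Fin ℓ → ℤ) {t : ℤ}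
    (ht₁ : β (lo h) ≤ t ∨ β (hi h) ≤ t) (ht₂ : t ≤ β (lo h) ∨ t ≤ β (hi h))
    (heq : ∀ x, excess x (setPair h β t (β (lo h) + β (hi h) - t)) = excess x β) :
    t = β (lo h) ∧ setPair h β t (β (lo h) + β (hi h) - t) = β ∨
      t = β (hi h) ∧ setPair h β t (β (lo h) + β (hi h) - t) = swapVec ℓ i β := by
  rcases eq_or_eq_of_excess_setPair_eq β ht₁ ht₂ heq with rfl | rfl
  · exact .inl ⟨rfl, by rw [add_sub_cancel_left, setPair_self]⟩
  · exact .inr ⟨rfl, by rw [add_sub_cancel_right, swapVec_eq_setPair h]⟩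

lemma ascents_swapVec_le (β : Fin ℓ → ℤ) (hβ : β (hi h) ≤ β (lo h)) :
    ascents (swapVec ℓ i β) ≤ ascents β + 1 := by
  rcases hβ.lt_or_eq with hlt | heq
  · have hasc : swapVec ℓ i β (lo h) < swapVec ℓ i β (hi h) := by
      rwa [swapVec_eq_setPair h, setPair_lo, setPair_hi]
    rw [ascents_eq_ascents_swapVec_add_one _ hasc, swapVec_swapVec h]
  · rw [swapVec_eq_setPair h, heq]
    nth_rw 2 [← heq]
    rw [setPair_self]
    omega

lemma keyLT_of_mem_support_demMon {α β γ : Fin ℓ → ℤ} (hasc : α (lo h) < α (hi h))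
    (hβ : KeyLT β (swapVec ℓ i α)) (hγ : γ ∈ (demMon h β).support) : KeyLT γ α := by
  obtain ⟨t, rfl, ht₁, ht₂, hbranch⟩ := exists_of_mem_support_demMon hγ
  have hexc := excess_setPair_le β ht₁ ht₂
  refine ⟨by rw [sum_setPair_eq, hβ.1, sum_swapVec h],
    fun x => (hexc x).trans ((hβ.2.1 x).trans (excess_swapVec h α x).le), fun heq => ?_⟩
  have hβα : ∀ x, excess x β = excess x α := fun x =>
    ((hβ.2.1 x).trans (excess_swapVec h α x).le).antisymm (heq x ▸ hexc x)
  have hlt : ascents β + 1 < ascents α := by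
    have := hβ.2.2 fun x => (hβα x).trans (excess_swapVec h α x).symm
    rw [ascents_eq_ascents_swapVec_add_one α hasc]
    omega
  rcases setPair_eq_or_eq_swapVec_of_excess_eq β ht₁ ht₂
      (fun x => (heq x).trans (hβα x).symm) with ⟨-, hγ⟩ | ⟨ht, hγ⟩
  · rw [hγ]
    omega
  · have hdesc : β (hi h) ≤ β (lo h) := not_lt.mp fun hasc' => by
      have := hbranch hasc'
      omega
    rw [hγ]
    have := ascents_swapVec_le β hdesc
    omega

lemma eq_or_keyLT_of_mem_support_demMon_swapVec {α γ : Fin ℓ → ℤ}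
    (hasc : α (lo h) < α (hi h)) (hγ : γ ∈ (demMon h (swapVec ℓ i α)).support) :
    γ = α ∨ KeyLT γ α := by
  obtain ⟨t, rfl, ht₁, ht₂, -⟩ := exists_of_mem_support_demMon hγ
  by_cases ht : t = swapVec ℓ i α (hi h)
  · left
    rw [ht, add_sub_cancel_right, ← swapVec_eq_setPair h, swapVec_swapVec h]
  · have hexc := excess_setPair_le _ ht₁ ht₂
    refine .inr ⟨by rw [sum_setPair_eq, sum_swapVec h],
      fun x => (hexc x).trans (excess_swapVec h α x).le, fun heq => ?_⟩
    rcases setPair_eq_or_eq_swapVec_of_excess_eq _ ht₁ ht₂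
        (fun x => (heq x).trans (excess_swapVec h α x).symm) with ⟨-, hγ⟩ | ⟨ht', -⟩
    · rw [hγ, ascents_eq_ascents_swapVec_add_one α hasc]
      omega
    · exact absurd ht' ht

lemma demMon_swapVec_apply_self {α : Fin ℓ → ℤ} (hasc : α (lo h) < α (hi h)) :
    demMon h (swapVec ℓ i α) α = 1 := by
  classical
  have hδlo : swapVec ℓ i α (lo h) = α (hi h) := by rw [swapVec_eq_setPair h, setPair_lo]
  have hδhi : swapVec ℓ i α (hi h) = α (lo h) := by rw [swapVec_eq_setPair h, setPair_hi]
  set δ := swapVec ℓ i α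
  have hself : setPair h δ (δ (hi h)) (δ (lo h)) = α := by
    rw [← swapVec_eq_setPair h, swapVec_swapVec h]
  rw [demMon, if_pos (by omega), Finsupp.finsetSum_apply,
    sum_eq_single_of_mem 0 (mem_range.mpr (Nat.succ_pos _))]
  · simp [hself]
  · intro t _ ht0
    refine Finsupp.single_eq_of_ne fun hα => ht0 ?_
    have := congrFun hα (lo h)
    rw [setPair_lo] at this
    omega

variable (h) in
def demL : L ℓ →ₗ[ℤ] L ℓ := Finsupp.linearCombination ℤ (demMon h)

lemma laurent_demL (c : L ℓ) : laurent ℓ (demL h c) = dem ℓ i (laurent ℓ c) := by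
  have : (laurent ℓ).comp (demL h) = (demLinear ℓ i).comp (laurent ℓ) :=
    Finsupp.lhom_ext fun β k => by
      rw [LinearMap.comp_apply, LinearMap.comp_apply, demL, Finsupp.linearCombination_single,
        map_zsmul, laurent_single, map_zsmul]
      exact congrArg _ (dem_monK β).symm
  exact LinearMap.congr_fun this c

lemma isUnitriangularAt_demL {c : L ℓ} {α : Fin ℓ → ℤ}
    (hc : IsUnitriangularAt c (swapVec ℓ i α)) (hasc : α (lo h) < α (hi h)) :
    IsUnitriangularAt (demL h c) α := by
  classical
  refine ⟨?_, fun γ hγ => ?_⟩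
  · rw [demL, Finsupp.linearCombination_apply, Finsupp.sum_apply, Finsupp.sum,
      sum_eq_single_of_mem _ (Finsupp.mem_support_iff.mpr (hc.1.symm ▸ one_ne_zero))]
    · rw [Finsupp.smul_apply, hc.1, one_smul, demMon_swapVec_apply_self hasc]
    · intro β hβ hne
      have hlt := (hc.2 β hβ).resolve_left hne
      rw [Finsupp.smul_apply, Finsupp.notMem_support_iff.mp fun hα =>
        KeyLT.irrefl α (keyLT_of_mem_support_demMon hasc hlt hα), smul_zero]
  · obtain ⟨β, hβ, hγβ⟩ := mem_biUnion.mp (Finsupp.support_sum hγ)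
    replace hγβ := Finsupp.support_smul hγβ
    rcases hc.2 β hβ with rfl | hlt
    · exact eq_or_keyLT_of_mem_support_demMon_swapVec hasc hγβ
    · exact .inr (keyLT_of_mem_support_demMon hasc hlt hγβ)

end Transposition

lemma exists_isUnitriangularAt_keyAux (n : ℕ) (α : Fin ℓ → ℤ) :
    ∃ c, laurent ℓ c = keyAux ℓ n α ∧ IsUnitriangularAt c α := by
  have hmon : ∀ α, laurent ℓ (Finsupp.single α 1) = monK ℓ α := fun α => by
    rw [laurent_single, one_smul]
  induction n generalizing α with
  | zero => exact ⟨_, hmon α, isUnitriangularAt_single α⟩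
  | succ n ih =>
    rw [keyAux]
    split_ifs with hex
    · obtain ⟨h, hasc⟩ := hex.choose_spec
      obtain ⟨c, hc, hcα⟩ := ih (swapVec ℓ hex.choose α)
      exact ⟨demL h c, by rw [laurent_demL, hc], isUnitriangularAt_demL hcα hasc⟩
    · exact ⟨_, hmon α, isUnitriangularAt_single α⟩

variable (ℓ) in
def keyExpansion (α : Fin ℓ → ℤ) : L ℓ := (exists_isUnitriangularAt_keyAux (ℓ * ℓ) α).choose

lemma laurent_keyExpansion (α : Fin ℓ → ℤ) : laurent ℓ (keyExpansion ℓ α) = keyPoly ℓ α :=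
  (exists_isUnitriangularAt_keyAux (ℓ * ℓ) α).choose_spec.1

lemma isUnitriangularAt_keyExpansion (α : Fin ℓ → ℤ) :
    IsUnitriangularAt (keyExpansion ℓ α) α :=
  (exists_isUnitriangularAt_keyAux (ℓ * ℓ) α).choose_spec.2

lemma keyComb_eq_laurent (c : L ℓ) :
    keyComb ℓ c = laurent ℓ (Finsupp.linearCombination ℤ (keyExpansion ℓ) c) := by
  rw [Finsupp.apply_linearCombination, keyComb, Finsupp.linearCombination_apply]
  simp only [Function.comp_apply, laurent_keyExpansion]

lemma linearCombination_keyExpansion_bijective :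
    Function.Bijective (Finsupp.linearCombination ℤ (keyExpansion ℓ)) := by
  let _ := partialOrderOfSO (KeyLT (ℓ := ℓ))
  have hdiag (α : Fin ℓ → ℤ) := (isUnitriangularAt_keyExpansion α).1
  have hsupp (α : Fin ℓ → ℤ) := (isUnitriangularAt_keyExpansion α).2
  exact ⟨Finsupp.linearCombination_injective_of_unitriangular _ hdiag hsupp,
    Finsupp.linearCombination_surjective_of_unitriangular setOf_keyLT_finite _ hdiag hsupp⟩

lemma keyComb_injective : Function.Injective (keyComb ℓ) := fun c c' hcc' =>
  linearCombination_keyExpansion_bijective.1 <| laurent_injective <| by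
    rwa [← keyComb_eq_laurent, ← keyComb_eq_laurent]

lemma exists_keyComb_eq_laurent (d : L ℓ) : ∃ c, keyComb ℓ c = laurent ℓ d := by
  obtain ⟨c, hc⟩ := linearCombination_keyExpansion_bijective.2 d
  exact ⟨c, by rw [keyComb_eq_laurent, hc]⟩

lemma polyTrunc_keyComb (c : L ℓ) : polyTrunc ℓ (keyComb ℓ c) = keyCombPos ℓ c := by
  have hex : ∃ c', keyComb ℓ c' = keyComb ℓ c := ⟨c, rfl⟩
  rw [polyTrunc, dif_pos hex, keyComb_injective hex.choose_spec]

lemma keyCombPos_eq_linearCombination (c : L ℓ) :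
    keyCombPos ℓ c =
      Finsupp.linearCombination ℤ (fun α => if ∀ j, 0 ≤ α j then keyPoly ℓ α else 0) c := by
  simp only [keyCombPos, Finsupp.linearCombination_apply, smul_ite, smul_zero]

/-- Key expansions of Laurent polynomials exist and are unique. -/
lemma polyTrunc_add {f g : Kf ℓ} (hf : f ∈ LinearMap.range (laurent ℓ))
    (hg : g ∈ LinearMap.range (laurent ℓ)) :
    polyTrunc ℓ (f + g) = polyTrunc ℓ f + polyTrunc ℓ g := by
  obtain ⟨d, rfl⟩ := hf
  obtain ⟨d', rfl⟩ := hg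
  obtain ⟨c, hc⟩ := exists_keyComb_eq_laurent d
  obtain ⟨c', hc'⟩ := exists_keyComb_eq_laurent d'
  have hadd : keyComb ℓ (c + c') = keyComb ℓ c + keyComb ℓ c' := by
    simp only [keyComb_eq_laurent, map_add]
  rw [← hc, ← hc', ← hadd, polyTrunc_keyComb, polyTrunc_keyComb, polyTrunc_keyComb]
  simp only [keyCombPos_eq_linearCombination, map_add]

lemma monK_nsmul (v : Fin ℓ → ℤ) (m : ℕ) : monK ℓ (m • v) = monK ℓ v ^ m := by
  induction m with
  | zero => rw [zero_smul, monK_zero, pow_zero]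
  | succ m ih => rw [succ_nsmul, monK_add, ih, pow_succ]

lemma monK_single_sub_single (j k : Fin ℓ) :
    monK ℓ (Pi.single j 1 - Pi.single k 1) = Xv ℓ j / Xv ℓ k := by
  rw [monK_sub, monK_single, monK_single, zpow_one, zpow_one]

lemma mul_monK_mem_range_laurent {f : Kf ℓ} (hf : f ∈ LinearMap.range (laurent ℓ))
    (v : Fin ℓ → ℤ) : f * monK ℓ v ∈ LinearMap.range (laurent ℓ) := by
  obtain ⟨c, rfl⟩ := hf
  exact ⟨_, (laurent_mul_monK c v).symm⟩

lemma coeff_catSeries_mem_range_laurent (Ψ : Finset (Fin ℓ × Fin ℓ)) (γ : Fin ℓ → ℤ) (n : ℕ) :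
    PowerSeries.coeff n (catSeries ℓ Ψ γ) ∈ LinearMap.range (laurent ℓ) := by
  classical
  rw [catSeries, PowerSeries.coeff_mul_C]
  refine mul_monK_mem_range_laurent ?_ γ
  induction Ψ using Finset.induction generalizing n with
  | empty =>
    rw [prod_empty, PowerSeries.coeff_one]
    split_ifs
    · exact ⟨Finsupp.single 0 1, by rw [laurent_single, one_smul, monK_zero]⟩
    · exact zero_mem _
  | insert a s _ ih =>
    rw [prod_insert ‹_›, PowerSeries.coeff_mul]
    refine sum_mem fun q _ => ?_
    rw [PowerSeries.coeff_mk, ← monK_single_sub_single, ← monK_nsmul, mul_comm]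
    exact mul_monK_mem_range_laurent (ih q.2) _

/-- The generating-function form of the recurrence: `1/(1 - q r) = 1 + q r/(1 - q r)` for the
factor `r = x_i/x_j` of the removable root. -/
lemma catSeries_eq_erase_add (Ψ : Finset (Fin ℓ × Fin ℓ)) {a : Fin ℓ × Fin ℓ} (ha : a ∈ Ψ)
    (γ : Fin ℓ → ℤ) :
    catSeries ℓ Ψ γ = catSeries ℓ (Ψ.erase a) γ + PowerSeries.X * catSeries ℓ Ψ
      (fun k => γ k + (Pi.single a.1 1 : Fin ℓ → ℤ) k - (Pi.single a.2 1 : Fin ℓ → ℤ) k) := by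
  have hγ : (fun k => γ k + (Pi.single a.1 1 : Fin ℓ → ℤ) k - (Pi.single a.2 1 : Fin ℓ → ℤ) k) =
      γ + (Pi.single a.1 1 - Pi.single a.2 1) := funext fun k => add_sub_assoc _ _ _
  rw [catSeries, catSeries, catSeries, ← mul_prod_erase _ _ ha, hγ, monK_add,
    monK_single_sub_single, map_mul]
  conv_lhs => rw [PowerSeries.mk_pow_eq_one_add_X_mul]
  ring

end NonsymCatalan

theorem HCat_removable_root_general (ℓ : ℕ) (Ψ : Finset (Fin ℓ × Fin ℓ))
    (a : Fin ℓ × Fin ℓ) (ha : a ∈ Ψ)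
    (γ : Fin ℓ → ℤ)
    (w : List ℕ) :
    HCat ℓ Ψ γ w =
      HCat ℓ (Ψ.erase a) γ w +
        PowerSeries.X *
          HCat ℓ Ψ
            (fun k => γ k + (Pi.single a.1 1 : Fin ℓ → ℤ) k -
              (Pi.single a.2 1 : Fin ℓ → ℤ) k) w := by
  open NonsymCatalan in
  ext (_ | n)
  · rw [map_add, PowerSeries.coeff_zero_X_mul, add_zero, HCat, HCat, PowerSeries.coeff_mk,
      PowerSeries.coeff_mk, catSeries_eq_erase_add Ψ ha, map_add, PowerSeries.coeff_zero_X_mul,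
      add_zero]
  · rw [map_add, PowerSeries.coeff_succ_X_mul, HCat, HCat, HCat, PowerSeries.coeff_mk,
      PowerSeries.coeff_mk, PowerSeries.coeff_mk, catSeries_eq_erase_add Ψ ha, map_add,
      PowerSeries.coeff_succ_X_mul,
      polyTrunc_add (coeff_catSeries_mem_range_laurent _ _ _)
        (coeff_catSeries_mem_range_laurent _ _ _), demWord_add]

/-- The removable-root recurrence for nonsymmetric Catalan
functions: if `Ψ ⊆ Δ⁺_ℓ` is a root ideal, `a` a removable root of `Ψ` (i.e.
`a ∈ Ψ` with `Ψ \ {a}` still a root ideal), `γ ∈ ℤ^ℓ` and `w` a word in the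
0-Hecke monoid of `S_ℓ`, then
`H(Ψ; γ; w) = H(Ψ \ {a}; γ; w) + q · H(Ψ; γ + ε_a; w)`,
where `ε_{(i,j)} = e_i - e_j`. -/
theorem HCat_removable_root (ℓ : ℕ) (Ψ : Finset (Fin ℓ × Fin ℓ))
    (hΨ : IsRootIdeal ℓ Ψ) (a : Fin ℓ × Fin ℓ) (ha : a ∈ Ψ)
    (hrem : IsRootIdeal ℓ (Ψ.erase a)) (γ : Fin ℓ → ℤ)
    (w : List ℕ) (hw : ∀ i ∈ w, i + 1 < ℓ) :
    HCat ℓ Ψ γ w =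
      HCat ℓ (Ψ.erase a) γ w +
        PowerSeries.X *
          HCat ℓ Ψ
            (fun k => γ k + (Pi.single a.1 1 : Fin ℓ → ℤ) k -
              (Pi.single a.2 1 : Fin ℓ → ℤ) k) w :=
  HCat_removable_root_general ℓ Ψ a ha γ w
end
end
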